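/- arXiv:1005.0781 — 5 statements merged into one kernel-verified Lean document; each statement's English description precedes it below -/
import Mathlib

section
/- The number of permutations of {1,...,n} having exactly k cycles of the form (a, a+1, ..., a+q-1) (adjacent q-cycles) equals the alternating sum over j from k to floor(n/q) of (-1)^{k+j} * C(j,k) * (n-(q-1)j)! / j!. -/
open Finset

/-- `a` with `a+1`, ..., `a+q-1` (0-indexed) form an adjacent `q`-cycle of `π`. -/
def isAdjCycle (q : ℕ) {n : ℕ} (π : Equiv.Perm (Fin n)) (a : ℕ) : Prop :=
  a + q ≤ n ∧ ∀ i : Fin n, a ≤ i.val → i.val < a + q →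
    (π i).val = if i.val = a + q - 1 then a else i.val + 1

instance (q n : ℕ) (π : Equiv.Perm (Fin n)) (a : ℕ) : Decidable (isAdjCycle q π a) := by
  unfold isAdjCycle; infer_instance

/-- The number of adjacent `q`-cycles of a permutation of `{1,...,n}`. -/
def adjCycleCount (q : ℕ) {n : ℕ} (π : Equiv.Perm (Fin n)) : ℕ :=
  ((Finset.range n).filter (isAdjCycle q π)).card

/-- `numAqC q n k` = number of permutations of `{1,...,n}` with exactly `k` adjacent `q`-cycles. -/
def numAqC (q n k : ℕ) : ℕ :=
  (Finset.univ.filter (fun π : Equiv.Perm (Fin n) => adjCycleCount q π = k)).card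

/-!
Double counting. A `j`-set of adjacent `q`-cycles of `π` is recorded by the set of their
starting points, a packing of `j` disjoint intervals of length `q` into `[0, n)`; there are
`C(n - (q - 1) j, j)` such packings, and the permutations realizing a given packing are
exactly those agreeing on its `q j` covered points with one fixed product of block rotations,
so there are `(n - q j)!` of them. Hence `∑_π C(c(π), j) = (n - (q - 1) j)! / j!`, where
`c(π)` is the number of adjacent `q`-cycles, and binomial inversion isolates `c(π) = k`.
-/

def IsIntervalPacking (q n : ℕ) (T : Finset ℕ) : Prop :=
  (∀ a ∈ T, a + q ≤ n) ∧ ∀ a ∈ T, ∀ b ∈ T, a < b → a + q ≤ b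

instance (q n : ℕ) (T : Finset ℕ) : Decidable (IsIntervalPacking q n T) := by
  unfold IsIntervalPacking; infer_instance

def intervalUnion (q : ℕ) (T : Finset ℕ) : Finset ℕ :=
  T.biUnion fun a => Ico a (a + q)

lemma mem_intervalUnion {q i : ℕ} {T : Finset ℕ} :
    i ∈ intervalUnion q T ↔ ∃ a ∈ T, a ≤ i ∧ i < a + q := by
  simp [intervalUnion]

namespace IsIntervalPacking

variable {q n : ℕ} {T : Finset ℕ}

lemma mono {T' : Finset ℕ} (hT : IsIntervalPacking q n T) (h : T' ⊆ T) :
    IsIntervalPacking q n T' :=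
  ⟨fun a ha => hT.1 a (h ha), fun a ha b hb => hT.2 a (h ha) b (h hb)⟩

lemma add_le_or_add_le (hT : IsIntervalPacking q n T) {a b : ℕ} (ha : a ∈ T) (hb : b ∈ T)
    (hab : a ≠ b) : a + q ≤ b ∨ b + q ≤ a := by
  rcases hab.lt_or_gt with h | h
  · exact .inl (hT.2 a ha b hb h)
  · exact .inr (hT.2 b hb a ha h)

lemma intervalUnion_subset_range (hT : IsIntervalPacking q n T) :
    intervalUnion q T ⊆ range n := by
  intro i hi
  obtain ⟨a, ha, -, hia⟩ := mem_intervalUnion.mp hi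
  have := hT.1 a ha
  exact mem_range.mpr (by omega)

lemma card_intervalUnion (hT : IsIntervalPacking q n T) :
    #(intervalUnion q T) = q * #T := by
  rw [intervalUnion, card_biUnion, sum_congr rfl fun a _ => Nat.card_Ico a (a + q)]
  · simp [mul_comm]
  · intro a ha b hb hab
    have := hT.add_le_or_add_le ha hb hab
    simp only [Function.onFun, disjoint_left, mem_Ico]
    omega

lemma subset_range (hq : 1 ≤ q) (hT : IsIntervalPacking q n T) : T ⊆ range n :=
  fun a ha => mem_range.mpr (by have := hT.1 a ha; omega)

lemma insert {c : ℕ} (hT : IsIntervalPacking q c T) (hc : c + q ≤ n) :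
    IsIntervalPacking q n (insert c T) := by
  refine ⟨forall_mem_insert _ _ _ |>.mpr ⟨hc, fun a ha => by have := hT.1 a ha; omega⟩, ?_⟩
  simp only [mem_insert]
  rintro a (rfl | ha) b (rfl | hb) hab
  · omega
  · have := hT.1 b hb
    omega
  · exact hT.1 a ha
  · exact hT.2 a ha b hb hab

lemma erase {c : ℕ} (hT : IsIntervalPacking q n T) (hcT : c ∈ T) (hc : c + q = n) :
    IsIntervalPacking q c (T.erase c) := by
  refine ⟨fun a ha => ?_, fun a ha b hb => hT.2 a (mem_of_mem_erase ha) b (mem_of_mem_erase hb)⟩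
  obtain ⟨hne, ha⟩ := mem_erase.mp ha
  rcases hne.lt_or_gt with h | h
  · exact hT.2 a ha c hcT h
  · have := hT.2 c hcT a ha h
    have := hT.1 a ha
    omega

lemma mul_card_le (hT : IsIntervalPacking q n T) : q * #T ≤ n := by
  simpa [← hT.card_intervalUnion] using card_le_card hT.intervalUnion_subset_range

end IsIntervalPacking

def intervalPackings (q N j : ℕ) : Finset (Finset ℕ) :=
  ((range N).powersetCard j).filter (IsIntervalPacking q N)

lemma mem_intervalPackings {q N j : ℕ} (hq : 1 ≤ q) {T : Finset ℕ} :
    T ∈ intervalPackings q N j ↔ #T = j ∧ IsIntervalPacking q N T := by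
  rw [intervalPackings, mem_filter, mem_powersetCard]
  exact ⟨fun h => ⟨h.1.2, h.2⟩, fun h => ⟨⟨h.2.subset_range hq, h.1⟩, h.2⟩⟩

lemma filter_notMem_intervalPackings {q N j : ℕ} (hq : 1 ≤ q) :
    (intervalPackings q N j).filter (N - q ∉ ·) = intervalPackings q (N - 1) j := by
  ext T
  simp only [mem_filter, mem_intervalPackings hq, IsIntervalPacking]
  constructor
  · rintro ⟨⟨hcard, hle, hgap⟩, hnot⟩
    refine ⟨hcard, fun a ha => ?_, hgap⟩
    have := hle a ha
    have : a ≠ N - q := fun h => hnot (h ▸ ha)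
    omega
  · rintro ⟨hcard, hle, hgap⟩
    exact ⟨⟨hcard, fun a ha => by have := hle a ha; omega, hgap⟩,
      fun h => by have := hle _ h; omega⟩

lemma card_filter_mem_intervalPackings {q N j : ℕ} (hq : 1 ≤ q) (hqN : q ≤ N) :
    #((intervalPackings q N (j + 1)).filter (N - q ∈ ·)) = #(intervalPackings q (N - q) j) := by
  refine card_nbij' (·.erase (N - q)) (insert (N - q)) (fun T hT => ?_) (fun T hT => ?_)
    (fun T hT => insert_erase (mem_filter.mp hT).2) (fun T hT => erase_insert fun h => ?_)
  · obtain ⟨hT, hmem⟩ := mem_filter.mp hT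
    rw [mem_intervalPackings hq] at hT
    rw [mem_coe, mem_intervalPackings hq, card_erase_of_mem hmem, hT.1]
    exact ⟨rfl, hT.2.erase hmem (by omega)⟩
  · rw [mem_coe, mem_intervalPackings hq] at hT
    have hnot : N - q ∉ T := fun h => by have := hT.2.1 _ h; omega
    rw [mem_coe, mem_filter, mem_intervalPackings hq, card_insert_of_notMem hnot, hT.1]
    exact ⟨⟨rfl, hT.2.insert (by omega)⟩, mem_insert_self _ _⟩
  · have := (mem_intervalPackings hq).mp hT |>.2.1 _ h
    omega

/- Pascal's rule: a packing either uses the last possible interval `[N - q, N)` or lives in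
`[0, N - 1)`. -/
lemma card_intervalPackings {q : ℕ} (hq : 1 ≤ q) (N j : ℕ) :
    #(intervalPackings q N j) = (N - (q - 1) * j).choose j := by
  induction N using Nat.strong_induction_on generalizing j with
  | _ N ih =>
  rcases j with _ | j
  · have : intervalPackings q N 0 = {∅} := by
      ext T
      simp +contextual [mem_intervalPackings hq, IsIntervalPacking]
    simp [this]
  generalize hr : q - 1 = r at ih ⊢
  have hmul : r * (j + 1) = r * j + r := mul_add_one _ _
  rcases lt_or_ge N q with hNq | hqN
  · have : intervalPackings q N (j + 1) = ∅ := by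
      refine eq_empty_of_forall_notMem fun T hT => ?_
      obtain ⟨hcard, hT⟩ := (mem_intervalPackings hq).mp hT
      obtain ⟨a, ha⟩ := card_pos.mp (by omega : 0 < #T)
      have := hT.1 a ha
      omega
    rw [this, card_empty, Nat.choose_eq_zero_of_lt (by omega)]
  rw [← card_filter_add_card_filter_not (p := (N - q ∈ ·)),
    card_filter_mem_intervalPackings hq hqN, filter_notMem_intervalPackings hq,
    ih _ (by omega), ih _ (by omega)]
  rcases le_or_gt N (r * (j + 1)) with hN | hN
  · have hj : 0 < j := Nat.pos_of_ne_zero fun h => by subst h; omega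
    rw [Nat.choose_eq_zero_of_lt (n := N - r * (j + 1)) (by omega),
      Nat.choose_eq_zero_of_lt (n := N - q - r * j) (by omega),
      Nat.choose_eq_zero_of_lt (n := N - 1 - r * (j + 1)) (by omega)]
  · rw [show N - r * (j + 1) = N - 1 - r * (j + 1) + 1 by omega,
      Nat.choose_succ_succ', show N - q - r * j = N - 1 - r * (j + 1) by omega]

lemma sum_Icc_neg_one_pow_mul_choose_mul_choose {c M : ℕ} (k : ℕ) (hc : c ≤ M) :
    ∑ j ∈ Icc k M, (-1 : ℤ) ^ (k + j) * j.choose k * c.choose j = if c = k then 1 else 0 := by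
  rcases lt_or_ge c k with hck | hkc
  · rw [if_neg hck.ne]
    refine sum_eq_zero fun j hj => ?_
    rw [Nat.choose_eq_zero_of_lt (hck.trans_le (mem_Icc.mp hj).1), Nat.cast_zero, mul_zero]
  calc ∑ j ∈ Icc k M, (-1 : ℤ) ^ (k + j) * j.choose k * c.choose j
      = ∑ j ∈ Icc k c, (-1 : ℤ) ^ (k + j) * j.choose k * c.choose j := by
        refine (sum_subset (Icc_subset_Icc_right hc) fun j hj hjc => ?_).symm
        have : c < j := by simp_all
        rw [Nat.choose_eq_zero_of_lt this, Nat.cast_zero, mul_zero]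
    _ = ∑ i ∈ range (c - k + 1),
          (-1 : ℤ) ^ (k + (k + i)) * (k + i).choose k * c.choose (k + i) := by
        rw [← Ico_add_one_right_eq_Icc, sum_Ico_eq_sum_range, show c + 1 - k = c - k + 1 by omega]
    _ = ∑ i ∈ range (c - k + 1), (c.choose k : ℤ) * ((-1) ^ i * (c - k).choose i) := by
        refine sum_congr rfl fun i hi => ?_
        have hchoose := Nat.choose_mul (n := c) (k := k + i) (s := k) (by omega)
        rw [Nat.add_sub_cancel_left] at hchoose
        rw [show k + (k + i) = 2 * k + i by ring, pow_add, pow_mul, neg_one_sq, one_pow, one_mul,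
          mul_assoc, ← Nat.cast_mul, mul_comm ((k + i).choose k), hchoose, Nat.cast_mul]
        ring
    _ = if c = k then 1 else 0 := by
        rw [← mul_sum, Int.alternating_sum_range_choose]
        by_cases h : c = k <;> simp [h]; omega

lemma choose_mul_factorial_mul_factorial_of_mul_le {q n j : ℕ} (hq : 1 ≤ q) (hj : q * j ≤ n) :
    (n - (q - 1) * j).choose j * (n - q * j).factorial * j.factorial
      = (n - (q - 1) * j).factorial := by
  have hqj : (q - 1) * j + j = q * j := by rw [← add_one_mul, Nat.sub_add_cancel hq]
  rw [show n - q * j = n - (q - 1) * j - j by omega, mul_right_comm,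
    Nat.choose_mul_factorial_mul_factorial (by omega)]

lemma card_filter_perm_eq_on {α : Type*} [Fintype α] [DecidableEq α] (τ : Equiv.Perm α)
    (s : Finset α) {p : Equiv.Perm α → Prop} [DecidablePred p]
    (hp : ∀ π, p π ↔ ∀ x ∈ s, π x = τ x) :
    #{π | p π} = (Fintype.card α - #s).factorial := by
  have hfix : #{π | p π} = #{σ : Equiv.Perm α | ∀ x ∈ s, σ x = x} :=
    card_nbij' (τ⁻¹ * ·) (τ * ·) (fun π hπ => by simp_all) (fun σ hσ => by simp_all)
      (fun π _ => by simp) (fun σ _ => by simp)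
  have hperm : Equiv.Perm {x // x ∉ s} ≃ {σ : Equiv.Perm α // ∀ x ∈ s, σ x = x} :=
    (Equiv.Perm.subtypeEquivSubtypePerm (· ∉ s)).trans (Equiv.subtypeEquivRight fun σ => by simp)
  rw [hfix, ← Fintype.card_subtype, ← Fintype.card_congr hperm, Fintype.card_perm,
    Fintype.card_subtype_compl, Fintype.card_coe]

lemma isAdjCycle.add_le_of_lt {q n : ℕ} (hq : 1 ≤ q) {π : Equiv.Perm (Fin n)} {a b : ℕ}
    (ha : isAdjCycle q π a) (hb : isAdjCycle q π b) (hab : a < b) : a + q ≤ b := by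
  by_contra! h
  -- the last point `a + q - 1` of the first block would lie in the second one
  have hlast : a + q - 1 < n := by have := ha.1; omega
  have ea := ha.2 ⟨a + q - 1, hlast⟩ (by simp; omega) (by simp; omega)
  have eb := hb.2 ⟨a + q - 1, hlast⟩ (by simp; omega) (by simp; omega)
  simp only [↓reduceIte] at ea eb
  split_ifs at eb <;> omega

lemma isIntervalPacking_of_forall_isAdjCycle {q n : ℕ} (hq : 1 ≤ q) {π : Equiv.Perm (Fin n)}
    {T : Finset ℕ} (hT : ∀ a ∈ T, isAdjCycle q π a) : IsIntervalPacking q n T :=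
  ⟨fun a ha => (hT a ha).1, fun a ha b hb => (hT a ha).add_le_of_lt hq (hT b hb)⟩

lemma adjCycleCount_le_div {q n : ℕ} (hq : 1 ≤ q) (π : Equiv.Perm (Fin n)) :
    adjCycleCount q π ≤ n / q := by
  rw [Nat.le_div_iff_mul_le hq, mul_comm]
  exact (isIntervalPacking_of_forall_isAdjCycle hq fun a ha => (mem_filter.mp ha).2).mul_card_le

def blockRotation {q n a : ℕ} (h : a + q ≤ n) : Equiv.Perm (Fin n) where
  toFun x := if hx : a ≤ x.val ∧ x.val < a + q then
    ⟨if x.val = a + q - 1 then a else x.val + 1, by split_ifs <;> omega⟩ else x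
  invFun x := if hx : a ≤ x.val ∧ x.val < a + q then
    ⟨if x.val = a then a + q - 1 else x.val - 1, by split_ifs <;> omega⟩ else x
  left_inv x := by
    ext
    by_cases hx : a ≤ x.val ∧ x.val < a + q
    · simp only [hx, and_self, dif_pos]
      split_ifs <;> simp only at * <;> omega
    · simp [hx]
  right_inv x := by
    ext
    by_cases hx : a ≤ x.val ∧ x.val < a + q
    · simp only [hx, and_self, dif_pos]
      split_ifs <;> simp only at * <;> omega
    · simp [hx]

lemma blockRotation_apply_of_lt_or_le {q n a : ℕ} (h : a + q ≤ n) {x : Fin n}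
    (hx : x.val < a ∨ a + q ≤ x.val) : blockRotation h x = x :=
  dif_neg (by omega)

lemma isAdjCycle_blockRotation {q n a : ℕ} (h : a + q ≤ n) : isAdjCycle q (blockRotation h) a :=
  ⟨h, fun i hai hia => by simp [blockRotation, hai, hia]⟩

lemma exists_perm_forall_isAdjCycle {q n : ℕ} {T : Finset ℕ} (hT : IsIntervalPacking q n T) :
    ∃ τ : Equiv.Perm (Fin n), (∀ a ∈ T, isAdjCycle q τ a) ∧
      ∀ x : Fin n, x.val ∉ intervalUnion q T → τ x = x := by
  induction T using Finset.induction_on with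
  | empty => exact ⟨1, by simp, by simp⟩
  | @insert a T haT ih =>
    obtain ⟨τ, hτ, hfix⟩ := ih (hT.mono (subset_insert a T))
    have han : a + q ≤ n := hT.1 a (mem_insert_self a T)
    have hsep : ∀ b ∈ T, a + q ≤ b ∨ b + q ≤ a := fun b hb =>
      hT.add_le_or_add_le (mem_insert_self a T) (mem_insert_of_mem hb) fun h => haT (h ▸ hb)
    refine ⟨blockRotation han * τ, ?_, fun x hx => ?_⟩
    · simp only [forall_mem_insert]
      refine ⟨⟨han, fun i h1 h2 => ?_⟩, fun b hb => ⟨(hτ b hb).1, fun i h1 h2 => ?_⟩⟩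
      · have hτi : τ i = i := hfix i fun hi => by
          obtain ⟨c, hc, hci, hic⟩ := mem_intervalUnion.mp hi
          have := hsep c hc
          omega
        rw [Equiv.Perm.mul_apply, hτi]
        exact (isAdjCycle_blockRotation han).2 i h1 h2
      · have hτi := (hτ b hb).2 i h1 h2
        rw [Equiv.Perm.mul_apply, blockRotation_apply_of_lt_or_le han, hτi]
        have := hsep b hb
        split_ifs at hτi <;> omega
    · have hxT : x.val ∉ intervalUnion q T := fun h => hx <| by
        obtain ⟨c, hc, hcx⟩ := mem_intervalUnion.mp h
        exact mem_intervalUnion.mpr ⟨c, mem_insert_of_mem hc, hcx⟩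
      have hxa : x.val < a ∨ a + q ≤ x.val := by
        by_contra! h
        exact hx (mem_intervalUnion.mpr ⟨a, mem_insert_self a T, h⟩)
      rw [Equiv.Perm.mul_apply, hfix x hxT, blockRotation_apply_of_lt_or_le han hxa]

lemma card_filter_forall_isAdjCycle {q n : ℕ} {T : Finset ℕ} (hT : IsIntervalPacking q n T) :
    #{π : Equiv.Perm (Fin n) | ∀ a ∈ T, isAdjCycle q π a} = (n - q * #T).factorial := by
  obtain ⟨τ, hτ, -⟩ := exists_perm_forall_isAdjCycle hT
  have hlt : ∀ i ∈ intervalUnion q T, i < n := fun i hi =>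
    mem_range.mp (hT.intervalUnion_subset_range hi)
  have hiff : ∀ π : Equiv.Perm (Fin n), (∀ a ∈ T, isAdjCycle q π a) ↔
      ∀ x ∈ (intervalUnion q T).attachFin hlt, π x = τ x := by
    intro π
    simp only [mem_attachFin, mem_intervalUnion]
    constructor
    · rintro hπ x ⟨a, ha, hax, hxa⟩
      exact Fin.ext (((hπ a ha).2 x hax hxa).trans ((hτ a ha).2 x hax hxa).symm)
    · intro hπ a ha
      refine ⟨hT.1 a ha, fun i hai hia => ?_⟩
      rw [hπ i ⟨a, ha, hai, hia⟩, (hτ a ha).2 i hai hia]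
  rw [card_filter_perm_eq_on τ _ hiff, Fintype.card_fin, card_attachFin, hT.card_intervalUnion]

lemma sum_choose_adjCycleCount {q n : ℕ} (hq : 1 ≤ q) (j : ℕ) :
    ∑ π : Equiv.Perm (Fin n), (adjCycleCount q π).choose j
      = #(intervalPackings q n j) * (n - q * j).factorial := by
  have hchoose : ∀ π : Equiv.Perm (Fin n), (adjCycleCount q π).choose j
      = #{T ∈ (range n).powersetCard j | ∀ a ∈ T, isAdjCycle q π a} := by
    intro π
    rw [adjCycleCount, ← card_powersetCard]
    congr 1
    ext T
    simp only [mem_powersetCard, mem_filter, subset_iff]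
    aesop
  have hcount : ∀ T ∈ (range n).powersetCard j,
      #{π : Equiv.Perm (Fin n) | ∀ a ∈ T, isAdjCycle q π a}
        = if IsIntervalPacking q n T then (n - q * j).factorial else 0 := by
    intro T hT
    split_ifs with hpack
    · rw [card_filter_forall_isAdjCycle hpack, (mem_powersetCard.mp hT).2]
    · exact card_eq_zero.mpr <| filter_eq_empty_iff.mpr fun π _ hπ =>
        hpack (isIntervalPacking_of_forall_isAdjCycle hq hπ)
  calc ∑ π : Equiv.Perm (Fin n), (adjCycleCount q π).choose j
      = ∑ T ∈ (range n).powersetCard j,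
          #{π : Equiv.Perm (Fin n) | ∀ a ∈ T, isAdjCycle q π a} := by
        simp only [hchoose]
        exact sum_card_bipartiteAbove_eq_sum_card_bipartiteBelow _
    _ = #(intervalPackings q n j) * (n - q * j).factorial := by
        rw [sum_congr rfl hcount, ← sum_filter, sum_const, smul_eq_mul, intervalPackings]

lemma sum_choose_adjCycleCount_eq_div {q n j : ℕ} (hq : 1 ≤ q) (hj : q * j ≤ n) :
    ∑ π : Equiv.Perm (Fin n), ((adjCycleCount q π).choose j : ℚ)
      = (n - (q - 1) * j).factorial / j.factorial := by
  rw [eq_div_iff (by positivity), ← choose_mul_factorial_mul_factorial_of_mul_le hq hj,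
    ← card_intervalPackings hq, ← sum_choose_adjCycleCount hq]
  push_cast
  ring

theorem stmt0_general (n q k : ℕ) (hq : 1 ≤ q) :
    (numAqC q n k : ℚ) =
      ∑ j ∈ Finset.Icc k (n / q),
        (-1 : ℚ) ^ (k + j) * (j.choose k) * ((n - (q - 1) * j).factorial : ℚ) / (j.factorial : ℚ) := by
  calc (numAqC q n k : ℚ)
      = ∑ π : Equiv.Perm (Fin n), ∑ j ∈ Icc k (n / q),
          (-1 : ℚ) ^ (k + j) * j.choose k * (adjCycleCount q π).choose j := by
        rw [numAqC, card_filter]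
        push_cast
        refine sum_congr rfl fun π _ => ?_
        exact_mod_cast
          (sum_Icc_neg_one_pow_mul_choose_mul_choose k (adjCycleCount_le_div hq π)).symm
    _ = _ := by
        rw [sum_comm]
        refine sum_congr rfl fun j hj => ?_
        have hqj : q * j ≤ n := mul_comm j q ▸ (Nat.le_div_iff_mul_le hq).mp (mem_Icc.mp hj).2
        rw [mul_div_assoc, ← sum_choose_adjCycleCount_eq_div hq hqj, mul_sum]

theorem stmt0 (n q k : ℕ) (hq : 1 ≤ q) (hqn : q ≤ n) :
    (numAqC q n k : ℚ) =
      ∑ j ∈ Finset.Icc k (n / q),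
        (-1 : ℚ) ^ (k + j) * (j.choose k) * ((n - (q - 1) * j).factorial : ℚ) / (j.factorial : ℚ) :=
  stmt0_general n q k hq
end

section
/- If q divides n, then k * a(n+q-1, k) = a(n, k-1) + (-1)^{k + n/q} * C(n/q, k-1); if q does not divide n, then k * a(n+q-1, k) = a(n, k-1). -/
open Finset

/-! Inclusion–exclusion on the adjacent cycles. A set of `j` adjacent `q`-cycles that a permutation
of `{0, …, m - 1}` can have simultaneously is a packing of `j` disjoint blocks `[a, a + q)`; there
are `C(m - (q - 1) j, j)` such packings and each one is realised by exactly `(m - q j)!`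
permutations. Hence the binomial moments `M(m, j) = ∑_π C(c(π), j)` have this closed form, and
`a(m, k) = ∑_j (-1)^(k + j) C(j, k) M(m, j)` by binomial inversion. In the closed form,
`(i + 1) M(n + q - 1, i + 1) = M(n, i) - [n = q i]`, and the correction term `[n = q i]` is what
produces the extra summand when `q ∣ n`. -/

namespace Equiv.Perm

open Nat

theorem card_filter_forall_apply_eq {α : Type*} [Fintype α] [DecidableEq α] (ρ : Perm α)
    (s : Finset α) : #{π : Perm α | ∀ x ∈ s, π x = ρ x} = (Fintype.card α - #s)! := by
  calc #{π : Perm α | ∀ x ∈ s, π x = ρ x}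
      = #{σ : Perm α | ∀ x ∈ s, σ x = x} := by
        refine card_nbij' (ρ⁻¹ * ·) (ρ * ·) ?_ ?_ ?_ ?_ <;> intro π <;>
          simp +contextual [mul_apply]
    _ = Fintype.card {σ : Perm α // ∀ x, ¬x ∉ s → σ x = x} := by
        rw [Fintype.card_subtype]; simp
    _ = Fintype.card (Perm {x // x ∉ s}) :=
        (Fintype.card_congr (Perm.subtypeEquivSubtypePerm _)).symm
    _ = (Fintype.card α - #s)! := by
        rw [Fintype.card_perm, Fintype.card_subtype_compl, Fintype.card_coe]

end Equiv.Perm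

namespace AdjCycle

open Equiv Nat

def IsPacking (q m : ℕ) (T : Finset ℕ) : Prop :=
  (∀ a ∈ T, a + q ≤ m) ∧ ∀ a ∈ T, ∀ b ∈ T, a < b → a + q ≤ b

instance (q m : ℕ) (T : Finset ℕ) : Decidable (IsPacking q m T) := by
  unfold IsPacking; infer_instance

def blocks (q : ℕ) (T : Finset ℕ) : Finset ℕ := T.biUnion fun a => Ico a (a + q)

theorem mem_blocks {q : ℕ} {T : Finset ℕ} {i : ℕ} :
    i ∈ blocks q T ↔ ∃ a ∈ T, a ≤ i ∧ i < a + q := by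
  simp [blocks]

/-- Rotates every block `[a, a + q)` one step up, its top `a + q - 1` going to `a`. The top of a
block is recognised as the `i` for which `i + 1` starts a block or lies in no block. -/
def rotate (q : ℕ) (T : Finset ℕ) (i : ℕ) : ℕ :=
  if i + 1 ∈ T ∨ i + 1 ∉ blocks q T then i + 1 - q else i + 1

namespace IsPacking

variable {q m : ℕ} {T : Finset ℕ}

theorem eq_of_mem_block (hT : IsPacking q m T) {a b i : ℕ} (ha : a ∈ T) (hb : b ∈ T)
    (hai : a ≤ i) (hia : i < a + q) (hbi : b ≤ i) (hib : i < b + q) : a = b := by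
  rcases lt_trichotomy a b with h | h | h
  · have := hT.2 a ha b hb h; omega
  · exact h
  · have := hT.2 b hb a ha h; omega

theorem card_blocks (hT : IsPacking q m T) : #(blocks q T) = q * #T := by
  rw [blocks, card_biUnion]
  · simp [mul_comm]
  · intro a ha b hb hab
    refine disjoint_left.2 fun i hia hib => hab ?_
    simp only [mem_Ico] at hia hib
    exact hT.eq_of_mem_block ha hb hia.1 hia.2 hib.1 hib.2

theorem lt_of_mem_blocks (hT : IsPacking q m T) {i : ℕ} (hi : i ∈ blocks q T) : i < m := by
  obtain ⟨a, ha, -, hia⟩ := mem_blocks.1 hi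
  have := hT.1 a ha
  omega

theorem rotate_eq (hT : IsPacking q m T) {a i : ℕ} (ha : a ∈ T) (hai : a ≤ i)
    (hia : i < a + q) : rotate q T i = if i = a + q - 1 then a else i + 1 := by
  by_cases htop : i = a + q - 1
  · have hcond : i + 1 ∈ T ∨ i + 1 ∉ blocks q T := by
      refine or_iff_not_imp_right.2 fun hU => ?_
      obtain ⟨b, hb, hbi, hib⟩ := mem_blocks.1 (not_not.1 hU)
      have hab : a < b := by
        by_contra! hba
        rcases hba.eq_or_lt with rfl | hlt
        · omega
        · have := hT.2 b hb a ha hlt; omega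
      have := hT.2 a ha b hb hab
      rwa [show i + 1 = b by omega]
    rw [rotate, if_pos hcond, if_pos htop]
    omega
  · have hcond : ¬(i + 1 ∈ T ∨ i + 1 ∉ blocks q T) := by
      refine not_or.2 ⟨fun hT' => ?_, not_not.2 (mem_blocks.2 ⟨a, ha, by omega, by omega⟩)⟩
      have := hT.2 a ha (i + 1) hT' (by omega)
      omega
    rw [rotate, if_neg hcond, if_neg htop]

theorem rotate_mem_Ico (hT : IsPacking q m T) {a i : ℕ} (ha : a ∈ T)
    (hai : a ≤ i) (hia : i < a + q) : a ≤ rotate q T i ∧ rotate q T i < a + q := by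
  rw [hT.rotate_eq ha hai hia]
  split_ifs <;> omega

theorem injOn_rotate (hT : IsPacking q m T) :
    Set.InjOn (rotate q T) (blocks q T) := by
  intro i hi j hj hij
  obtain ⟨a, ha, hai, hia⟩ := mem_blocks.1 hi
  obtain ⟨b, hb, hbj, hjb⟩ := mem_blocks.1 hj
  have hi' := hT.rotate_mem_Ico ha hai hia
  have hj' := hT.rotate_mem_Ico hb hbj hjb
  obtain rfl : a = b := hT.eq_of_mem_block ha hb hi'.1 hi'.2 (hij ▸ hj'.1) (hij ▸ hj'.2)
  rw [hT.rotate_eq ha hai hia, hT.rotate_eq ha hbj hjb] at hij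
  split_ifs at hij <;> omega

theorem exists_perm_eq_rotate (hT : IsPacking q m T) :
    ∃ ρ : Perm (Fin m), ∀ x : Fin m, x.val ∈ blocks q T → (ρ x).val = rotate q T x := by
  have hmaps : ∀ i ∈ blocks q T, rotate q T i ∈ blocks q T := fun i hi => by
    obtain ⟨a, ha, hai, hia⟩ := mem_blocks.1 hi
    exact mem_blocks.2 ⟨a, ha, hT.rotate_mem_Ico ha hai hia⟩
  let f : Fin m → Fin m := fun x =>
    if hx : x.val ∈ blocks q T then ⟨rotate q T x, hT.lt_of_mem_blocks (hmaps x hx)⟩ else x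
  have hf : Function.Injective f := by
    intro x y hxy
    simp only [f] at hxy
    split_ifs at hxy with hx hy hy
    · exact Fin.ext (hT.injOn_rotate hx hy (Fin.mk.inj_iff.1 hxy))
    · exact absurd (hxy ▸ hmaps x hx) hy
    · exact absurd (hxy ▸ hmaps y hy) hx
    · exact hxy
  refine ⟨Equiv.ofBijective f (Finite.injective_iff_bijective.1 hf), fun x hx => ?_⟩
  simp [f, hx]

theorem card_filter_forall_isAdjCycle (hT : IsPacking q m T) :
    #{π : Perm (Fin m) | ∀ a ∈ T, isAdjCycle q π a} = (m - q * #T)! := by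
  obtain ⟨ρ, hρ⟩ := hT.exists_perm_eq_rotate
  let s := (blocks q T).attachFin fun _ => hT.lt_of_mem_blocks
  have hs : ∀ π : Perm (Fin m), (∀ a ∈ T, isAdjCycle q π a) ↔ ∀ x ∈ s, π x = ρ x := by
    intro π
    simp only [s, mem_attachFin, mem_blocks, isAdjCycle, Fin.ext_iff]
    constructor
    · rintro h x ⟨a, ha, hax, hxa⟩
      rw [(h a ha).2 x hax hxa, hρ x (mem_blocks.2 ⟨a, ha, hax, hxa⟩),
        hT.rotate_eq ha hax hxa]
    · intro h a ha
      refine ⟨hT.1 a ha, fun x hax hxa => ?_⟩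
      rw [h x ⟨a, ha, hax, hxa⟩, hρ x (mem_blocks.2 ⟨a, ha, hax, hxa⟩),
        hT.rotate_eq ha hax hxa]
  have hcard : #s = q * #T := by rw [card_attachFin, hT.card_blocks]
  rw [filter_congr fun π _ => hs π, ← hcard]
  -- `convert` reconciles the two `Decidable` instances of the filter predicate
  convert Perm.card_filter_forall_apply_eq ρ s using 3
  rw [Fintype.card_fin]

end IsPacking

variable {q m : ℕ}

theorem isPacking_of_forall_isAdjCycle {π : Perm (Fin m)} {T : Finset ℕ}
    (h : ∀ a ∈ T, isAdjCycle q π a) : IsPacking q m T := by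
  refine ⟨fun a ha => (h a ha).1, fun a ha b hb hab => ?_⟩
  by_contra! hba
  -- the top `a + q - 1` of the block at `a` would be sent both to `a` and to `a + q`
  have hlt : a + q - 1 < m := by have := (h a ha).1; omega
  have hπa := (h a ha).2 ⟨a + q - 1, hlt⟩ (by simp; omega) (by simp; omega)
  have hπb := (h b hb).2 ⟨a + q - 1, hlt⟩ (by simp; omega) (by simp; omega)
  dsimp only at hπa hπb
  rw [if_pos rfl] at hπa
  rw [if_neg (by omega)] at hπb
  omega

def packings (q m j : ℕ) : Finset (Finset ℕ) := {T ∈ (range m).powersetCard j | IsPacking q m T}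

theorem mem_packings (hq : 0 < q) {j : ℕ} {T : Finset ℕ} :
    T ∈ packings q m j ↔ #T = j ∧ IsPacking q m T := by
  simp only [packings, mem_filter, mem_powersetCard, and_assoc]
  refine and_iff_right_of_imp fun ⟨_, hT⟩ a ha => mem_range.2 ?_
  have := hT.1 a ha
  omega

theorem isPacking_insert_sub_iff (hqm : q ≤ m) {T : Finset ℕ} (hT : m - q ∉ T) :
    IsPacking q m (insert (m - q) T) ↔ IsPacking q (m - q) T := by
  simp only [IsPacking, mem_insert, forall_eq_or_imp]
  constructor
  · rintro ⟨⟨-, hbound⟩, -, hsep⟩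
    refine ⟨fun a ha => ?_, fun a ha b hb hab => (hsep a ha).2 b hb hab⟩
    have := hbound a ha
    have := (hsep a ha).1
    rcases lt_or_gt_of_ne (ne_of_mem_of_not_mem ha hT) with h | h <;> omega
  · rintro ⟨hbound, hsep⟩
    refine ⟨⟨by omega, fun a ha => by have := hbound a ha; omega⟩,
      ⟨by omega, fun b hb _ => by have := hbound b hb; omega⟩,
      fun a ha => ⟨fun _ => hbound a ha, hsep a ha⟩⟩

theorem isPacking_and_sub_notMem_iff (hq : 0 < q) (hqm : q ≤ m) {T : Finset ℕ} :
    IsPacking q m T ∧ m - q ∉ T ↔ IsPacking q (m - 1) T := by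
  constructor
  · rintro ⟨⟨hbound, hsep⟩, hT⟩
    refine ⟨fun a ha => ?_, hsep⟩
    have := hbound a ha
    have := ne_of_mem_of_not_mem ha hT
    omega
  · rintro ⟨hbound, hsep⟩
    refine ⟨⟨fun a ha => by have := hbound a ha; omega, hsep⟩, fun h => ?_⟩
    have := hbound _ h
    omega

theorem card_filter_sub_mem_packings (hq : 0 < q) (hqm : q ≤ m) (j : ℕ) :
    #{T ∈ packings q m (j + 1) | m - q ∈ T} = #(packings q (m - q) j) := by
  have hnot : ∀ T ∈ packings q (m - q) j, m - q ∉ T := fun T hT h => by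
    have := ((mem_packings hq).1 hT).2.1 _ h
    omega
  refine card_nbij' (·.erase (m - q)) (insert (m - q)) ?_ ?_ ?_ ?_
  · intro T hT
    simp only [coe_filter, Set.mem_ofPred_eq, mem_packings hq] at hT
    obtain ⟨⟨hcard, hpack⟩, hmem⟩ := hT
    rw [← insert_erase hmem, isPacking_insert_sub_iff hqm (notMem_erase _ _)] at hpack
    simp [mem_packings hq, card_erase_of_mem hmem, hcard, hpack]
  · intro T hT
    have hT' := (mem_packings hq).1 hT
    simp only [coe_filter, Set.mem_ofPred_eq, mem_packings hq, mem_insert_self, and_true]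
    exact ⟨by rw [card_insert_of_notMem (hnot T hT), hT'.1],
      (isPacking_insert_sub_iff hqm (hnot T hT)).2 hT'.2⟩
  · intro T hT
    exact insert_erase (mem_filter.1 hT).2
  · intro T hT
    exact erase_insert (hnot T hT)

theorem filter_sub_notMem_packings (hq : 0 < q) (hqm : q ≤ m) (j : ℕ) :
    {T ∈ packings q m j | m - q ∉ T} = packings q (m - 1) j := by
  ext T
  simp only [mem_filter, mem_packings hq, and_assoc, ← isPacking_and_sub_notMem_iff hq hqm]

theorem card_packings (hq : 0 < q) (m j : ℕ) :
    #(packings q m j) = (m - (q - 1) * j).choose j := by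
  induction m using Nat.strong_induction_on generalizing j with
  | _ m ih =>
  rcases j with _ | j
  · rw [Nat.choose_zero_right, card_eq_one]
    exact ⟨∅, by ext T; simp +contextual [mem_packings hq, IsPacking]⟩
  rcases lt_or_ge m q with hmq | hqm
  · have hempty : packings q m (j + 1) = ∅ := eq_empty_of_forall_notMem fun T hT => by
      obtain ⟨hcard, hpack⟩ := (mem_packings hq).1 hT
      obtain ⟨a, ha⟩ := card_pos.1 (by omega : 0 < #T)
      have := hpack.1 a ha
      omega
    rw [hempty, card_empty, Nat.choose_eq_zero_of_lt]
    have : q - 1 ≤ (q - 1) * (j + 1) := Nat.le_mul_of_pos_right _ j.succ_pos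
    omega
  rw [← card_filter_add_card_filter_not (fun T => m - q ∈ T),
    card_filter_sub_mem_packings hq hqm, filter_sub_notMem_packings hq hqm,
    ih (m - q) (by omega), ih (m - 1) (by omega)]
  -- Pascal's rule, once the truncated subtractions are sorted out
  have hmul : (q - 1) * (j + 1) = (q - 1) * j + (q - 1) := by ring
  rcases lt_or_ge ((q - 1) * (j + 1)) m with hlt | hge
  · rw [show m - (q - 1) * (j + 1) = m - 1 - (q - 1) * (j + 1) + 1 by omega,
      show m - q - (q - 1) * j = m - 1 - (q - 1) * (j + 1) by omega, Nat.choose_succ_succ]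
  · obtain ⟨j, rfl⟩ : ∃ i, j = i + 1 := Nat.exists_eq_succ_of_ne_zero (by rintro rfl; omega)
    rw [show m - (q - 1) * (j + 1 + 1) = 0 by omega,
      show m - 1 - (q - 1) * (j + 1 + 1) = 0 by omega, show m - q - (q - 1) * (j + 1) = 0 by omega]
    simp

theorem choose_adjCycleCount (π : Perm (Fin m)) (j : ℕ) :
    (adjCycleCount q π).choose j = #{T ∈ (range m).powersetCard j | ∀ a ∈ T, isAdjCycle q π a} := by
  rw [adjCycleCount, ← card_powersetCard]
  congr 1
  ext T
  simp only [mem_powersetCard, mem_filter, subset_iff]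
  exact ⟨fun ⟨hT, hcard⟩ => ⟨⟨fun a ha => (hT ha).1, hcard⟩, fun a ha => (hT ha).2⟩,
    fun ⟨⟨hT, hcard⟩, h⟩ => ⟨fun a ha => ⟨hT ha, h a ha⟩, hcard⟩⟩

def binomialMoment (q m j : ℕ) : ℕ := ∑ π : Perm (Fin m), (adjCycleCount q π).choose j

theorem binomialMoment_eq (hq : 0 < q) (m j : ℕ) :
    binomialMoment q m j = (m - (q - 1) * j).choose j * (m - q * j)! := by
  calc binomialMoment q m j
      = ∑ T ∈ (range m).powersetCard j, #{π : Perm (Fin m) | ∀ a ∈ T, isAdjCycle q π a} := by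
        simp only [binomialMoment, choose_adjCycleCount]
        exact sum_card_bipartiteAbove_eq_sum_card_bipartiteBelow _
    _ = ∑ T ∈ packings q m j, (m - q * j)! := by
        rw [packings, sum_filter]
        refine sum_congr rfl fun T hT => ?_
        rw [← (mem_powersetCard.1 hT).2]
        split_ifs with hpack
        · exact hpack.card_filter_forall_isAdjCycle
        · exact card_eq_zero.2 <| filter_eq_empty_iff.2 fun π _ h =>
            hpack (isPacking_of_forall_isAdjCycle h)
    _ = _ := by rw [sum_const, card_packings hq, smul_eq_mul]

theorem sum_range_neg_one_pow_mul_choose_mul_choose {c R : ℕ} (hcR : c < R) (k : ℕ) :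
    ∑ j ∈ range R, (-1 : ℤ) ^ (k + j) * j.choose k * c.choose j = if c = k then 1 else 0 := by
  rw [eventually_constant_sum (N := c + 1)
    (fun j hj => by simp [Nat.choose_eq_zero_of_lt (by omega : c < j)]) hcR]
  rcases lt_or_ge c k with hck | hkc
  · rw [if_neg (by omega)]
    exact sum_eq_zero fun j hj => by
      simp [Nat.choose_eq_zero_of_lt (by simp at hj; omega : j < k)]
  rw [show c + 1 = k + (c - k + 1) by omega, sum_range_add,
    sum_eq_zero fun j hj => by simp [Nat.choose_eq_zero_of_lt (mem_range.1 hj)], zero_add]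
  calc ∑ i ∈ range (c - k + 1), (-1 : ℤ) ^ (k + (k + i)) * (k + i).choose k * c.choose (k + i)
      = ∑ i ∈ range (c - k + 1), c.choose k * ((-1 : ℤ) ^ i * (c - k).choose i) := by
        refine sum_congr rfl fun i _ => ?_
        have h := Nat.choose_mul (n := c) (k := k + i) (s := k) (by omega)
        rw [Nat.add_sub_cancel_left] at h
        replace h := congrArg (Nat.cast : ℕ → ℤ) h
        push_cast at h
        rw [show k + (k + i) = 2 * k + i by ring, pow_add, pow_mul]
        linear_combination (-1 : ℤ) ^ i * h
    _ = if c = k then 1 else 0 := by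
        rw [← mul_sum, Int.alternating_sum_range_choose]
        by_cases hck : c = k <;> simp [hck, Nat.sub_eq_zero_iff_le, hkc.ge_iff_eq']

theorem numAqC_eq_sum {R : ℕ} (hmR : m < R) (k : ℕ) :
    (numAqC q m k : ℤ) = ∑ j ∈ range R, (-1 : ℤ) ^ (k + j) * j.choose k * binomialMoment q m j := by
  have hlt : ∀ π : Perm (Fin m), adjCycleCount q π < R := fun π =>
    (card_filter_le _ _).trans_lt (by simpa using hmR)
  calc (numAqC q m k : ℤ) = ∑ π : Perm (Fin m), if adjCycleCount q π = k then 1 else 0 := by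
        simp [numAqC, sum_boole]
    _ = ∑ π : Perm (Fin m), ∑ j ∈ range R,
          (-1 : ℤ) ^ (k + j) * j.choose k * (adjCycleCount q π).choose j := by
        simp only [sum_range_neg_one_pow_mul_choose_mul_choose (hlt _)]
    _ = _ := by
        rw [sum_comm]
        simp [binomialMoment, mul_sum]

theorem succ_mul_choose_succ_mul_factorial {N i : ℕ} (hiN : i < N) :
    (i + 1) * (N.choose (i + 1) * (N - (i + 1))!) = N.choose i * (N - i)! := by
  calc (i + 1) * (N.choose (i + 1) * (N - (i + 1))!)
      = N.choose i * ((N - i) * (N - i - 1)!) := by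
        rw [Nat.sub_sub, ← mul_assoc, ← mul_assoc, mul_comm (i + 1), Nat.choose_succ_right_eq]
    _ = N.choose i * (N - i)! := by rw [Nat.mul_factorial_pred (by omega)]

theorem succ_mul_binomialMoment_add (hq : 0 < q) (n i : ℕ) :
    (i + 1) * binomialMoment q (n + q - 1) (i + 1) + (if n = q * i then 1 else 0) =
      binomialMoment q n i := by
  rw [binomialMoment_eq hq, binomialMoment_eq hq]
  have hqi : (q - 1) * i + i = q * i := by rw [← add_one_mul, Nat.sub_add_cancel hq]
  rw [show n + q - 1 - (q - 1) * (i + 1) = n - (q - 1) * i by rw [mul_add_one]; omega,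
    show n + q - 1 - q * (i + 1) = n - (q - 1) * i - (i + 1) by rw [mul_add_one]; omega]
  rcases lt_trichotomy (q * i) n with hlt | heq | hgt
  · rw [if_neg hlt.ne', add_zero, succ_mul_choose_succ_mul_factorial (by omega),
      show n - (q - 1) * i - i = n - q * i by omega]
  · rw [if_pos heq.symm, show n - (q - 1) * i = i by omega, ← heq]
    simp
  · have hi : 0 < i := Nat.pos_of_ne_zero (by rintro rfl; simp at hgt)
    rw [if_neg hgt.ne, Nat.choose_eq_zero_of_lt (by omega : n - (q - 1) * i < i + 1),
      Nat.choose_eq_zero_of_lt (by omega : n - (q - 1) * i < i)]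
    simp

theorem sum_range_ite_eq_mul {M : Type*} [AddCommMonoid M] {n R : ℕ} (hq : 0 < q)
    (hnR : n < R) (f : ℕ → M) :
    ∑ i ∈ range R, (if n = q * i then f i else 0) = if q ∣ n then f (n / q) else 0 := by
  split_ifs with hdvd
  · obtain ⟨t, rfl⟩ := hdvd
    have htR : t < R := by have := Nat.le_mul_of_pos_left t hq; omega
    simp_rw [Nat.mul_left_cancel_iff hq, eq_comm (a := t), Nat.mul_div_cancel_left t hq]
    simp [htR]
  · exact sum_eq_zero fun i _ => if_neg fun h => hdvd ⟨i, h⟩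

theorem inversion_summand_succ (hq : 0 < q) (n k i : ℕ) :
    ((k + 1 : ℕ) : ℤ) * ((-1 : ℤ) ^ (k + 1 + (i + 1)) * (i + 1).choose (k + 1) *
      binomialMoment q (n + q - 1) (i + 1)) =
      (-1 : ℤ) ^ (k + i) * i.choose k * binomialMoment q n i +
        if n = q * i then (-1 : ℤ) ^ (k + 1 + i) * i.choose k else 0 := by
  have hchoose := congrArg (Nat.cast : ℕ → ℤ) (Nat.add_one_mul_choose_eq i k)
  have hmoment := congrArg (Nat.cast : ℕ → ℤ) (succ_mul_binomialMoment_add hq n i)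
  push_cast [pow_succ] at hchoose hmoment ⊢
  split_ifs at hmoment ⊢ <;> linear_combination (-1 : ℤ) ^ (k + i) *
    (i.choose k * hmoment - binomialMoment q (n + q - 1) (i + 1) * hchoose)

end AdjCycle

theorem stmt4_general (q n k : ℕ) (hq : 1 ≤ q) (hk : 1 ≤ k) :
    (k * numAqC q (n + q - 1) k : ℤ) =
      (numAqC q n (k - 1) : ℤ) +
        if q ∣ n then (-1 : ℤ) ^ (k + n / q) * ((n / q).choose (k - 1)) else 0 := by
  obtain ⟨k, rfl⟩ : ∃ k', k = k' + 1 := ⟨k - 1, by omega⟩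
  rw [Nat.add_sub_cancel, AdjCycle.numAqC_eq_sum (R := n + q + 1) (by omega),
    AdjCycle.numAqC_eq_sum (R := n + q) (by omega), sum_range_succ', mul_add, mul_sum,
    sum_congr rfl fun i _ => AdjCycle.inversion_summand_succ hq n k i, sum_add_distrib,
    AdjCycle.sum_range_ite_eq_mul hq (by omega)]
  simp [add_assoc]

theorem stmt4 (q n k : ℕ) (hq : 1 ≤ q) (hn : 1 ≤ n) (hk : 1 ≤ k) :
    (k * numAqC q (n + q - 1) k : ℤ) =
      (numAqC q n (k - 1) : ℤ) +
        if q ∣ n then (-1 : ℤ) ^ (k + n / q) * ((n / q).choose (k - 1)) else 0 :=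
  stmt4_general q n k hq hk
end

section
/- If q divides n, then a(n-1, 1) = b_{n-q} + (-1)^{n/q}; otherwise a(n-1, 1) = b_{n-q}. -/
open Finset

def b (q n : ℕ) : ℕ := numAqC q n 0

/-!
Inclusion–exclusion over sets of adjacent cycles. For a permutation `π` of `Fin m` with `c(π)`
adjacent `q`-cycles, `∑ π, (c(π)).choose j` counts pairs `(π, S)` where `S` is a `j`-set of
adjacent `q`-cycles of `π`. Such cycles are disjoint, so `S` is a set of `j` starting points at
mutual distance `≥ q`; there are `(m - j(q-1)).choose j` of those, and each is contained in
`(m - jq)!` permutations. Alternating sums of these binomial moments give `b_m` and `a(m, 1)`.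
The identity `(i+1) C(n-1-(i+1)(q-1), i+1) (n-1-(i+1)q)! = C(n-q-i(q-1), i) (n-q-iq)!` then matches
the `(i+1)`-st term of `a(n-1, 1)` with the `i`-th term of `b_{n-q}`, except when `(i+1)q = n`:
there the left side vanishes and the right side is `1`, which produces the term `(-1)^(n/q)`.
-/

open Nat Equiv

theorem Int.alternating_sum_range_choose_of_lt {c K : ℕ} (hc : c < K) :
    ∑ j ∈ Finset.range K, (-1 : ℤ) ^ j * c.choose j = if c = 0 then 1 else 0 := by
  rw [← Int.alternating_sum_range_choose]
  refine (sum_subset (range_subset_range.2 hc) fun j hjK hjc => ?_).symm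
  rw [Nat.choose_eq_zero_of_lt (by simpa using hjc), Nat.cast_zero, mul_zero]

theorem Int.alternating_sum_range_mul_choose_of_lt {c K : ℕ} (hc : c < K) :
    ∑ j ∈ Finset.range K, (-1 : ℤ) ^ (j + 1) * j * c.choose j = if c = 1 then 1 else 0 := by
  obtain ⟨K, rfl⟩ : ∃ K', K = K' + 1 := ⟨K - 1, by omega⟩
  rw [sum_range_succ', Nat.cast_zero, mul_zero, zero_mul, add_zero]
  cases c with
  | zero => simp [Nat.choose_zero_succ]
  | succ c =>
    have hterm : ∀ j, (-1 : ℤ) ^ (j + 1 + 1) * ↑(j + 1) * ↑((c + 1).choose (j + 1))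
        = (c + 1) * ((-1) ^ j * c.choose j) := by
      intro j
      have h := congrArg (Nat.cast : ℕ → ℤ) (Nat.add_one_mul_choose_eq c j)
      push_cast at h ⊢
      linear_combination (-1 : ℤ) ^ j * h.symm
    simp only [hterm, ← mul_sum, Int.alternating_sum_range_choose_of_lt (by omega : c < K)]
    split_ifs <;> simp_all

theorem card_filter_eq_zero_eq_alternating_sum {ι : Type*} (s : Finset ι) {f : ι → ℕ} {K : ℕ}
    (hf : ∀ i ∈ s, f i < K) :
    (#{i ∈ s | f i = 0} : ℤ) =
      ∑ j ∈ range K, (-1 : ℤ) ^ j * ∑ i ∈ s, ((f i).choose j : ℤ) := by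
  simp_rw [mul_sum]
  rw [sum_comm, card_filter, Nat.cast_sum]
  refine sum_congr rfl fun i hi => ?_
  rw [Int.alternating_sum_range_choose_of_lt (hf i hi)]
  split_ifs <;> rfl

theorem card_filter_eq_one_eq_alternating_sum {ι : Type*} (s : Finset ι) {f : ι → ℕ} {K : ℕ}
    (hf : ∀ i ∈ s, f i < K) :
    (#{i ∈ s | f i = 1} : ℤ) =
      ∑ j ∈ range K, (-1 : ℤ) ^ (j + 1) * j * ∑ i ∈ s, ((f i).choose j : ℤ) := by
  simp_rw [mul_sum]
  rw [sum_comm, card_filter, Nat.cast_sum]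
  refine sum_congr rfl fun i hi => ?_
  rw [Int.alternating_sum_range_mul_choose_of_lt (hf i hi)]
  split_ifs <;> rfl

def IsAdmissible (q m : ℕ) (S : Finset ℕ) : Prop :=
  (∀ a ∈ S, a + q ≤ m) ∧ ∀ a ∈ S, ∀ b ∈ S, a < b → a + q ≤ b

instance (q m : ℕ) : DecidablePred (IsAdmissible q m) := fun _ => by
  unfold IsAdmissible; infer_instance

def admissibleSets (q m j : ℕ) : Finset (Finset ℕ) :=
  {S ∈ (range m).powersetCard j | IsAdmissible q m S}

def blocks (q : ℕ) (S : Finset ℕ) : Finset ℕ :=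
  S.biUnion fun a => Ico a (a + q)

section Admissible

variable {q m j : ℕ} {S : Finset ℕ}

theorem mem_blocks {x : ℕ} : x ∈ blocks q S ↔ ∃ a ∈ S, a ≤ x ∧ x < a + q := by
  simp [blocks]

theorem card_blocks (hS : IsAdmissible q m S) : #(blocks q S) = #S * q := by
  rw [blocks, card_biUnion,
    sum_congr rfl fun a _ => by rw [Nat.card_Ico, Nat.add_sub_cancel_left], sum_const, smul_eq_mul]
  intro a ha b hb hab
  rw [Function.onFun, disjoint_left]
  intro x hxa hxb
  rw [mem_Ico] at hxa hxb
  rcases lt_or_gt_of_ne hab with h | h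
  · have := hS.2 a ha b hb h; omega
  · have := hS.2 b hb a ha h; omega

theorem blocks_subset_range (hS : IsAdmissible q m S) : blocks q S ⊆ range m := by
  intro x hx
  obtain ⟨a, ha, -, hxa⟩ := mem_blocks.1 hx
  have := hS.1 a ha
  rw [mem_range]; omega

theorem card_mul_le_of_isAdmissible (hS : IsAdmissible q m S) : #S * q ≤ m := by
  simpa [card_blocks hS] using card_le_card (blocks_subset_range hS)

theorem mem_admissibleSets (hq : 1 ≤ q) :
    S ∈ admissibleSets q m j ↔ #S = j ∧ IsAdmissible q m S := by
  rw [admissibleSets, mem_filter, mem_powersetCard, and_assoc, and_iff_right_of_imp]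
  exact fun ⟨_, hS⟩ a ha => mem_range.2 (by have := hS.1 a ha; omega)

theorem isAdmissible_pred_iff (hm : 0 < m) :
    IsAdmissible q (m - 1) S ↔ IsAdmissible q m S ∧ m - q ∉ S := by
  refine ⟨fun ⟨hle, hsep⟩ => ⟨⟨fun a ha => by have := hle a ha; omega, hsep⟩, fun h => ?_⟩,
    fun ⟨⟨hle, hsep⟩, hnot⟩ => ⟨fun a ha => ?_, hsep⟩⟩
  · have := hle _ h; omega
  · have := hle a ha
    rcases eq_or_ne a (m - q) with rfl | hne
    · exact absurd ha hnot
    · omega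

theorem isAdmissible_iff_erase (hq : 1 ≤ q) (hqm : q ≤ m) (hS : m - q ∈ S) :
    IsAdmissible q m S ↔ IsAdmissible q (m - q) (S.erase (m - q)) := by
  constructor
  · rintro ⟨hle, hsep⟩
    have hlt : ∀ a ∈ S, a ≠ m - q → a + q ≤ m - q := by
      intro a ha hne
      rcases lt_or_gt_of_ne hne with h | h
      · exact hsep a ha _ hS h
      · have := hsep _ hS a ha h; have := hle a ha; omega
    exact ⟨fun a ha => hlt a (mem_of_mem_erase ha) (ne_of_mem_erase ha),
      fun a ha b hb => hsep a (mem_of_mem_erase ha) b (mem_of_mem_erase hb)⟩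
  · rintro ⟨hle, hsep⟩
    simp only [mem_erase, ne_eq, and_imp] at hle hsep
    refine ⟨fun a ha => ?_, fun a ha b hb hab => ?_⟩
    · rcases eq_or_ne a (m - q) with rfl | ha'
      · omega
      · have := hle a ha' ha; omega
    · rcases eq_or_ne a (m - q) with rfl | ha' <;> rcases eq_or_ne b (m - q) with rfl | hb'
      · omega
      · have := hle b hb' hb; omega
      · have := hle a ha' ha; omega
      · exact hsep a ha' ha b hb' hb hab

theorem filter_notMem_admissibleSets (hq : 1 ≤ q) (hqm : q ≤ m) :
    {S ∈ admissibleSets q m j | m - q ∉ S} = admissibleSets q (m - 1) j := by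
  ext S
  rw [mem_filter, mem_admissibleSets hq, mem_admissibleSets hq, isAdmissible_pred_iff (by omega),
    and_assoc]

theorem card_filter_mem_admissibleSets (hq : 1 ≤ q) (hqm : q ≤ m) (hj : 1 ≤ j) :
    #{S ∈ admissibleSets q m j | m - q ∈ S} = #(admissibleSets q (m - q) (j - 1)) := by
  refine card_nbij' (·.erase (m - q)) (insert (m - q)) ?_ ?_ ?_ ?_
  · intro S hS
    rw [mem_coe, mem_filter, mem_admissibleSets hq] at hS
    obtain ⟨⟨hcard, hadm⟩, hmem⟩ := hS
    simp only [mem_coe, mem_admissibleSets hq, card_erase_of_mem hmem, hcard, true_and]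
    exact (isAdmissible_iff_erase hq hqm hmem).1 hadm
  · intro T hT
    rw [mem_coe, mem_admissibleSets hq] at hT
    obtain ⟨hcard, hadm⟩ := hT
    have hnot : m - q ∉ T := fun h => by have := hadm.1 _ h; omega
    simp only [mem_coe, mem_filter, mem_admissibleSets hq, mem_insert_self, and_true,
      card_insert_of_notMem hnot, hcard]
    refine ⟨by omega, ?_⟩
    rwa [isAdmissible_iff_erase hq hqm (mem_insert_self _ _), erase_insert hnot]
  · intro S hS
    exact insert_erase (mem_filter.1 hS).2
  · intro T hT
    refine erase_insert fun h => ?_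
    have := ((mem_admissibleSets hq).1 hT).2.1 _ h
    omega

theorem card_admissibleSets_eq_add (hq : 1 ≤ q) (hqm : q ≤ m) (hj : 1 ≤ j) :
    #(admissibleSets q m j) =
      #(admissibleSets q (m - 1) j) + #(admissibleSets q (m - q) (j - 1)) := by
  rw [← card_filter_add_card_filter_not (fun S => m - q ∈ S), filter_notMem_admissibleSets hq hqm,
    card_filter_mem_admissibleSets hq hqm hj, add_comm]

theorem card_admissibleSets (hq : 1 ≤ q) :
    #(admissibleSets q m j) = (m - j * (q - 1)).choose j := by
  induction m using Nat.strong_induction_on generalizing j with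
  | _ m ih =>
  have hjq : j * q = j * (q - 1) + j := by
    rw [Nat.mul_sub_one]; have := Nat.le_mul_of_pos_right j hq; omega
  rcases Nat.eq_zero_or_pos j with rfl | hj
  · simp [admissibleSets, IsAdmissible, filter_singleton]
  rcases lt_or_ge m (j * q) with hm | hm
  · rw [Nat.choose_eq_zero_of_lt (by omega), Finset.card_eq_zero, eq_empty_iff_forall_notMem]
    intro S hS
    obtain ⟨hcard, hadm⟩ := (mem_admissibleSets hq).1 hS
    have := card_mul_le_of_isAdmissible hadm
    rw [hcard] at this; omega
  have hqm : q ≤ m := le_trans (Nat.le_mul_of_pos_left q hj) hm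
  obtain ⟨M, hM⟩ : ∃ M, m - j * (q - 1) = M + 1 := ⟨m - j * (q - 1) - 1, by omega⟩
  have hj' : (j - 1) * (q - 1) + (q - 1) = j * (q - 1) := by
    rw [← Nat.succ_mul, Nat.succ_eq_add_one, Nat.sub_add_cancel hj]
  rw [card_admissibleSets_eq_add hq hqm hj, ih _ (by omega), ih _ (by omega), hM,
    show m - 1 - j * (q - 1) = M by omega, show m - q - (j - 1) * (q - 1) = M by omega]
  obtain ⟨i, rfl⟩ : ∃ i, j = i + 1 := ⟨j - 1, by omega⟩
  rw [Nat.add_sub_cancel, Nat.choose_succ_succ', add_comm]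

end Admissible

theorem Equiv.Perm.card_filter_forall_mem_eq {α : Type*} [Fintype α] [DecidableEq α]
    (σ : Perm α) (s : Finset α) :
    #{π : Perm α | ∀ x ∈ s, π x = σ x} = (Fintype.card α - #s)! := by
  have hfix : #{π : Perm α | ∀ x ∈ s, π x = σ x} = #{τ : Perm α | ∀ x, ¬x ∉ s → τ x = x} := by
    refine card_nbij' (σ⁻¹ * ·) (σ * ·) ?_ ?_ ?_ ?_ <;> intro π hπ <;> simp_all
  rw [hfix, ← Fintype.card_subtype, ← Fintype.card_congr (Perm.subtypeEquivSubtypePerm (· ∉ s)),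
    Fintype.card_perm, Fintype.card_subtype_compl, Fintype.card_coe]

section AdjCycles

variable {q m : ℕ} {S : Finset ℕ}

theorem exists_perm_isAdjCycle {a : ℕ} (hq : 1 ≤ q) (ha : a + q ≤ m) :
    ∃ c : Perm (Fin m), isAdjCycle q c a ∧ ∀ x : Fin m, (x : ℕ) ∉ Ico a (a + q) → c x = x := by
  obtain ⟨p, rfl⟩ : ∃ p, q = p + 1 := ⟨q - 1, by omega⟩
  let e : Fin (p + 1) ↪ Fin m :=
    ⟨fun t => ⟨a + t, by omega⟩, fun s t h => Fin.ext (by simpa using h)⟩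
  have he : ∀ t, (e t : ℕ) = a + t := fun _ => rfl
  refine ⟨(finRotate (p + 1)).viaFintypeEmbedding e, ⟨ha, fun i h₁ h₂ => ?_⟩, fun x hx => ?_⟩
  · obtain ⟨t, rfl⟩ : ∃ t : Fin (p + 1), e t = i :=
      ⟨⟨i - a, by omega⟩, Fin.ext (by rw [he, Fin.val_mk]; omega)⟩
    rw [Perm.viaFintypeEmbedding_apply_image, finRotate_apply, he, he, Fin.val_add_one]
    split_ifs with h₃ h₄ <;> simp only [Fin.ext_iff, Fin.val_last] at h₃ <;> omega
  · refine Perm.viaFintypeEmbedding_apply_notMem_range _ _ fun ⟨t, ht⟩ => hx ?_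
    rw [← ht, he, mem_Ico]
    omega

theorem IsAdmissible.mono {T : Finset ℕ} (hS : IsAdmissible q m S) (hTS : T ⊆ S) :
    IsAdmissible q m T :=
  ⟨fun a ha => hS.1 a (hTS ha), fun a ha b hb => hS.2 a (hTS ha) b (hTS hb)⟩

theorem exists_perm_forall_isAdjCycle_s6 (hq : 1 ≤ q) (hS : IsAdmissible q m S) :
    ∃ σ : Perm (Fin m),
      (∀ a ∈ S, isAdjCycle q σ a) ∧ ∀ x : Fin m, (x : ℕ) ∉ blocks q S → σ x = x := by
  induction S using Finset.induction_on with
  | empty => exact ⟨1, by simp, fun _ _ => rfl⟩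
  | insert a S haS ih =>
    obtain ⟨σ, hσ, hσfix⟩ := ih (hS.mono (subset_insert a S))
    obtain ⟨c, hc, hcfix⟩ := exists_perm_isAdjCycle hq (hS.1 a (mem_insert_self a S))
    have hdisj : ∀ x : ℕ, x ∈ blocks q S → x ∉ Ico a (a + q) := by
      intro x hx hxa
      obtain ⟨b, hb, hbx, hxb⟩ := mem_blocks.1 hx
      rw [mem_Ico] at hxa
      rcases lt_or_gt_of_ne (ne_of_mem_of_not_mem hb haS).symm with h | h
      · have := hS.2 a (mem_insert_self a S) b (mem_insert_of_mem hb) h; omega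
      · have := hS.2 b (mem_insert_of_mem hb) a (mem_insert_self a S) h; omega
    refine ⟨c * σ, fun b hb => ?_, fun x hx => ?_⟩
    · rcases mem_insert.1 hb with rfl | hb
      · refine ⟨hc.1, fun i h₁ h₂ => ?_⟩
        rw [Perm.mul_apply, hσfix i fun hi => hdisj i hi (mem_Ico.2 ⟨h₁, h₂⟩)]
        exact hc.2 i h₁ h₂
      · refine ⟨(hσ b hb).1, fun i h₁ h₂ => ?_⟩
        have hσi := (hσ b hb).2 i h₁ h₂
        have hmem : ((σ i : Fin m) : ℕ) ∈ blocks q S :=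
          mem_blocks.2 ⟨b, hb, by split_ifs at hσi <;> omega⟩
        rw [Perm.mul_apply, hcfix _ (hdisj _ hmem), hσi]
    · rw [blocks, biUnion_insert, mem_union, not_or] at hx
      rw [Perm.mul_apply, hσfix x hx.2, hcfix x hx.1]

theorem forall_isAdjCycle_iff_eqOn_blocks {σ : Perm (Fin m)} (hσ : ∀ a ∈ S, isAdjCycle q σ a)
    (π : Perm (Fin m)) :
    (∀ a ∈ S, isAdjCycle q π a) ↔ ∀ x : Fin m, (x : ℕ) ∈ blocks q S → π x = σ x := by
  constructor
  · intro hπ x hx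
    obtain ⟨a, ha, hax, hxa⟩ := mem_blocks.1 hx
    exact Fin.ext (((hπ a ha).2 x hax hxa).trans ((hσ a ha).2 x hax hxa).symm)
  · intro hπ a ha
    refine ⟨(hσ a ha).1, fun i h₁ h₂ => ?_⟩
    rw [hπ i (mem_blocks.2 ⟨a, ha, h₁, h₂⟩)]
    exact (hσ a ha).2 i h₁ h₂

theorem card_filter_forall_isAdjCycle_s6 (hq : 1 ≤ q) (hS : IsAdmissible q m S) :
    #{π : Perm (Fin m) | ∀ a ∈ S, isAdjCycle q π a} = (m - #S * q)! := by
  obtain ⟨σ, hσ, -⟩ := exists_perm_forall_isAdjCycle_s6 hq hS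
  have hlt : ∀ x ∈ blocks q S, x < m := fun x hx => mem_range.1 (blocks_subset_range hS hx)
  have hcard : m - #S * q = Fintype.card (Fin m) - #((blocks q S).attachFin hlt) := by
    rw [card_attachFin, card_blocks hS, Fintype.card_fin]
  rw [hcard, ← Perm.card_filter_forall_mem_eq σ]
  congr 1; ext π
  simp only [mem_filter, mem_univ, true_and, forall_isAdjCycle_iff_eqOn_blocks hσ,
    mem_attachFin hlt]

theorem isAdmissible_of_forall_isAdjCycle (hq : 1 ≤ q) {π : Perm (Fin m)}
    (hπ : ∀ a ∈ S, isAdjCycle q π a) : IsAdmissible q m S := by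
  refine ⟨fun a ha => (hπ a ha).1, fun a ha b hb hab => ?_⟩
  by_contra! hba
  have haq := (hπ a ha).1
  -- `a + q - 1` is the last point of the cycle at `a`, but an inner point of the one at `b`.
  let i : Fin m := ⟨a + q - 1, by omega⟩
  have hia := (hπ a ha).2 i (by simp [i]; omega) (by simp [i]; omega)
  have hib := (hπ b hb).2 i (by simp [i]; omega) (by simp [i]; omega)
  rw [if_pos (by simp [i])] at hia
  rw [if_neg (by simp [i]; omega)] at hib
  simp only [i] at hia hib
  omega

end AdjCycles

def binomialMoment (q m j : ℕ) : ℕ :=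
  ∑ π : Perm (Fin m), (adjCycleCount q π).choose j

section BinomialMoment

variable {q m : ℕ}

theorem choose_adjCycleCount (π : Perm (Fin m)) (j : ℕ) :
    (adjCycleCount q π).choose j =
      #{S ∈ (range m).powersetCard j | ∀ a ∈ S, isAdjCycle q π a} := by
  rw [adjCycleCount, ← card_powersetCard]
  congr 1; ext S
  simp only [mem_powersetCard, mem_filter, subset_iff]
  grind

theorem binomialMoment_eq (hq : 1 ≤ q) (j : ℕ) :
    binomialMoment q m j = (m - j * (q - 1)).choose j * (m - j * q)! := by
  have hS : ∀ S ∈ (range m).powersetCard j,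
      #{π : Perm (Fin m) | ∀ a ∈ S, isAdjCycle q π a} =
        if IsAdmissible q m S then (m - j * q)! else 0 := by
    intro S hS
    split_ifs with hadm
    · rw [card_filter_forall_isAdjCycle_s6 hq hadm, (mem_powersetCard.1 hS).2]
    · exact card_eq_zero.2 (filter_eq_empty_iff.2 fun π _ hπ =>
        hadm (isAdmissible_of_forall_isAdjCycle hq hπ))
  simp only [binomialMoment, choose_adjCycleCount, card_filter]
  rw [sum_comm, sum_congr rfl fun S _ => (card_filter _ _).symm, sum_congr rfl hS, ← sum_filter,
    sum_const, smul_eq_mul, ← admissibleSets, card_admissibleSets hq]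

theorem adjCycleCount_le (π : Perm (Fin m)) : adjCycleCount q π ≤ m :=
  (card_filter_le _ _).trans (card_range m).le

theorem b_eq_alternating_sum {K : ℕ} (hK : m < K) :
    (b q m : ℤ) = ∑ j ∈ range K, (-1 : ℤ) ^ j * binomialMoment q m j := by
  rw [b, numAqC,
    card_filter_eq_zero_eq_alternating_sum _ fun π _ => (adjCycleCount_le π).trans_lt hK]
  simp [binomialMoment]

theorem numAqC_one_eq_alternating_sum {K : ℕ} (hK : m < K) :
    (numAqC q m 1 : ℤ) = ∑ j ∈ range K, (-1 : ℤ) ^ (j + 1) * j * binomialMoment q m j := by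
  rw [numAqC,
    card_filter_eq_one_eq_alternating_sum _ fun π _ => (adjCycleCount_le π).trans_lt hK]
  simp [binomialMoment]

end BinomialMoment

theorem succ_mul_binomialMoment_add_ite {q n : ℕ} (hq : 1 ≤ q) (hqn : q ≤ n) (i : ℕ) :
    (i + 1) * binomialMoment q (n - 1) (i + 1) + (if (i + 1) * q = n then 1 else 0) =
      binomialMoment q (n - q) i := by
  rw [binomialMoment_eq hq, binomialMoment_eq hq]
  obtain ⟨p, rfl⟩ : ∃ p, q = p + 1 := ⟨q - 1, by omega⟩
  have h₁ : (i + 1) * (p + 1) = i * p + p + i + 1 := by ring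
  have h₂ : (i + 1) * p = i * p + p := by ring
  have h₃ : i * (p + 1) = i * p + i := by ring
  simp only [Nat.add_sub_cancel, h₁, h₂, h₃]
  rcases lt_trichotomy (i * p + p + i + 1) n with hlt | rfl | hgt
  · obtain ⟨r, rfl⟩ : ∃ r, n = i * p + p + i + 1 + r + 1 :=
      ⟨n - (i * p + p + i + 1) - 1, by omega⟩
    rw [if_neg (by omega), show i * p + p + i + 1 + r + 1 - 1 - (i * p + p) = i + r + 1 by omega,
      show i * p + p + i + 1 + r + 1 - 1 - (i * p + p + i + 1) = r by omega,
      show i * p + p + i + 1 + r + 1 - (p + 1) - i * p = i + r + 1 by omega,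
      show i * p + p + i + 1 + r + 1 - (p + 1) - (i * p + i) = r + 1 by omega, factorial_succ]
    -- `(i + 1) C(N, i + 1) = (N - i) C(N, i)` with `N - i = r + 1`, which turns `r!` into `(r + 1)!`.
    have h := Nat.choose_succ_right_eq (i + r + 1) i
    rw [show i + r + 1 - i = r + 1 by omega] at h
    rw [add_zero, ← mul_assoc, mul_comm (i + 1), h, mul_assoc]
  · rw [if_pos rfl, show i * p + p + i + 1 - (p + 1) - i * p = i by omega,
      show i * p + p + i + 1 - (p + 1) - (i * p + i) = 0 by omega, Nat.choose_self,
      show i * p + p + i + 1 - 1 - (i * p + p) = i by omega, Nat.choose_succ_self]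
    simp
  · have hi : i ≠ 0 := by
      rintro rfl
      simp only [zero_mul, zero_add] at hgt
      omega
    rw [if_neg (by omega), Nat.choose_eq_zero_of_lt (by omega : n - 1 - (i * p + p) < i + 1),
      Nat.choose_eq_zero_of_lt (by omega : n - (p + 1) - i * p < i)]
    simp

theorem sum_range_ite_succ_mul_eq {q n : ℕ} (hn : 0 < n) :
    ∑ i ∈ range n, (if (i + 1) * q = n then (-1 : ℤ) ^ (i + 1) else 0) =
      if q ∣ n then (-1) ^ (n / q) else 0 := by
  split_ifs with hqn
  · obtain ⟨d, rfl⟩ := hqn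
    have hq : 0 < q := Nat.pos_of_mul_pos_right hn
    have hd : 0 < d := Nat.pos_of_mul_pos_left hn
    have hdn : d - 1 < q * d := by have := Nat.le_mul_of_pos_left d hq; omega
    rw [sum_eq_single_of_mem (d - 1) (mem_range.2 hdn),
      if_pos (by rw [Nat.sub_add_cancel hd, mul_comm]), Nat.sub_add_cancel hd,
      Nat.mul_div_cancel_left d hq]
    intro i _ hi
    refine if_neg fun h => hi ?_
    rw [mul_comm q, Nat.mul_right_cancel_iff hq] at h
    omega
  · refine sum_eq_zero fun i _ => if_neg fun h => hqn ⟨i + 1, by rw [← h, mul_comm]⟩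

theorem stmt6 (q n : ℕ) (hq : 1 ≤ q) (hn : q < n) :
    (numAqC q (n - 1) 1 : ℤ) =
      (b q (n - q) : ℤ) + if q ∣ n then (-1 : ℤ) ^ (n / q) else 0 := by
  have hstep : ∀ i, (-1 : ℤ) ^ (i + 1 + 1) * ↑(i + 1) * binomialMoment q (n - 1) (i + 1) =
      (-1) ^ i * binomialMoment q (n - q) i + if (i + 1) * q = n then (-1) ^ (i + 1) else 0 := by
    intro i
    have h := congrArg (Nat.cast : ℕ → ℤ) (succ_mul_binomialMoment_add_ite hq hn.le i)
    push_cast at h ⊢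
    rw [← h]
    split_ifs <;> ring
  rw [numAqC_one_eq_alternating_sum (K := n + 1) (by omega),
    b_eq_alternating_sum (K := n) (by omega), sum_range_succ', Nat.cast_zero, mul_zero, zero_mul,
    add_zero]
  simp only [hstep, sum_add_distrib, sum_range_ite_succ_mul_eq (by omega : 0 < n)]
end

section
/- For k ≥ 1, the numbers a(n,k) satisfy the recurrence a(n+1,k) = a(n-q+1, k-1) + (n-qk+1)*a(n,k) - a(n-q+1, k) + q*(k+1)*a(n,k+1). -/
open Finset

open Equiv

variable {n q : ℕ}

def extTop {n : ℕ} (σ : Perm (Fin n)) : Perm (Fin (n+1)) :=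
  Equiv.permCongr finSuccEquivLast.symm (Equiv.optionCongr σ)

@[simp] lemma extTop_castSucc (σ : Perm (Fin n)) (i : Fin n) :
    extTop σ i.castSucc = (σ i).castSucc := by
  simp [extTop, Equiv.permCongr_apply]

@[simp] lemma extTop_last (σ : Perm (Fin n)) : extTop σ (Fin.last n) = Fin.last n := by
  simp [extTop, Equiv.permCongr_apply]

def Phi {n : ℕ} (c : Fin (n+1)) (σ : Perm (Fin n)) : Perm (Fin (n+1)) :=
  Equiv.swap (Fin.last n) c * extTop σ

lemma Phi_last (c : Fin (n+1)) (σ : Perm (Fin n)) : Phi c σ (Fin.last n) = c := by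
  simp [Phi, Equiv.swap_apply_left]

lemma Phi_castSucc (c : Fin (n+1)) (σ : Perm (Fin n)) (i : Fin n) :
    Phi c σ i.castSucc = if (σ i).castSucc = c then Fin.last n else (σ i).castSucc := by
  simp only [Phi, Perm.mul_apply, extTop_castSucc]
  rcases eq_or_ne ((σ i).castSucc) c with h | h
  · simp [h, Equiv.swap_apply_right]
  · rw [Equiv.swap_apply_of_ne_of_ne (by simp [Fin.ext_iff, (σ i).isLt.ne]) h, if_neg h]

lemma Phi_val (c : Fin (n+1)) (σ : Perm (Fin n)) (i : Fin (n+1)) (hi : i.val < n) :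
    (Phi c σ i).val = if (σ ⟨i.val, hi⟩).val = c.val then n else (σ ⟨i.val, hi⟩).val := by
  have : i = Fin.castSucc ⟨i.val, hi⟩ := by simp [Fin.ext_iff]
  conv_lhs => rw [this]
  rw [Phi_castSucc]
  rcases eq_or_ne ((σ ⟨i.val, hi⟩).castSucc) c with h | h
  · rw [if_pos h, if_pos]; · rfl
    · simpa [Fin.ext_iff] using h
  · rw [if_neg h, if_neg]; · rfl
    · simpa [Fin.ext_iff] using h

lemma Phi_last_val (c : Fin (n+1)) (σ : Perm (Fin n)) :
    (Phi c σ ⟨n, lt_add_one n⟩).val = c.val := by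
  have : (⟨n, lt_add_one n⟩ : Fin (n+1)) = Fin.last n := rfl
  rw [this, Phi_last]

/-- `σ` maps the top `q-1` positions cyclically: i ↦ i+1, n-1 ↦ n+1-q. -/
def wrapTop (q : ℕ) {n : ℕ} (σ : Perm (Fin n)) : Prop :=
  ∀ i : Fin n, n + 1 - q ≤ i.val →
    (σ i).val = if i.val = n - 1 then n + 1 - q else i.val + 1

instance (q n : ℕ) (σ : Perm (Fin n)) : Decidable (wrapTop q σ) := by
  unfold wrapTop; infer_instance



lemma Phi_val' (c : Fin (n+1)) (σ : Perm (Fin n)) (i : Fin n) :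
    (Phi c σ i.castSucc).val = if (σ i).val = c.val then n else (σ i).val := by
  rw [Phi_castSucc]
  rcases eq_or_ne ((σ i).castSucc) c with h | h
  · rw [if_pos h, if_pos (by simpa [Fin.ext_iff] using h)]; rfl
  · rw [if_neg h, if_neg (by simpa [Fin.ext_iff] using h)]; simp

lemma starts_disjoint (hq : 1 ≤ q) (σ : Perm (Fin n)) {a a' : ℕ}
    (h : isAdjCycle q σ a) (h' : isAdjCycle q σ a') (hlt : a < a') (hov : a' < a + q) :
    False := by
  obtain ⟨hb, hc⟩ := h
  obtain ⟨hb', hc'⟩ := h'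
  have hi : a + q - 1 < n := by omega
  have e1 := hc ⟨a + q - 1, hi⟩ (by simp only [Fin.val_mk]; omega) (by simp only [Fin.val_mk]; omega)
  have e2 := hc' ⟨a + q - 1, hi⟩ (by simp only [Fin.val_mk]; omega) (by simp only [Fin.val_mk]; omega)
  simp only [Fin.val_mk] at e1 e2
  split_ifs at e1 e2 <;> omega

/-- The key pointwise lemma: starts of adjacent cycles of `Phi c σ`. -/
lemma isAdjCycle_Phi_iff (hq : 1 ≤ q) (hn : q ≤ n) (c : Fin (n+1)) (σ : Perm (Fin n)) (a : ℕ) :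
    isAdjCycle q (Phi c σ) a ↔
      (isAdjCycle q σ a ∧ ¬(a ≤ c.val ∧ c.val < a + q)) ∨
      (a = n + 1 - q ∧ c.val = n + 1 - q ∧ wrapTop q σ) := by
  constructor
  · rintro ⟨hb, hc⟩
    rcases eq_or_lt_of_le hb with heq | hlt
    · -- top case: a = n+1-q
      right
      have ha : a = n + 1 - q := by omega
      have hcv : c.val = a := by
        have := hc ⟨n, lt_add_one n⟩ (by simp only [Fin.val_mk]; omega)
          (by simp only [Fin.val_mk]; omega)
        rw [Phi_last_val] at this
        simp only [Fin.val_mk] at this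
        split_ifs at this <;> omega
      refine ⟨ha, by omega, ?_⟩
      intro i hi
      have := hc i.castSucc (by simp only [Fin.coe_castSucc]; omega)
        (by simp only [Fin.coe_castSucc]; omega)
      rw [Phi_val'] at this
      simp only [Fin.coe_castSucc] at this
      have hv : (σ i).val ≤ n := le_of_lt (σ i).isLt
      split_ifs at this ⊢ <;> omega
    · -- low case: a + q ≤ n
      left
      have hb' : a + q ≤ n := by omega
      have key : ∀ i : Fin n, a ≤ i.val → i.val < a + q →
          (σ i).val ≠ c.val ∧ (σ i).val = if i.val = a + q - 1 then a else i.val + 1 := by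
        intro i hge hlt'
        have := hc i.castSucc (by simp only [Fin.coe_castSucc]; omega)
          (by simp only [Fin.coe_castSucc]; omega)
        rw [Phi_val'] at this
        simp only [Fin.coe_castSucc] at this
        constructor
        · intro hce
          rw [if_pos hce] at this
          split_ifs at this <;> omega
        · split_ifs at this with h1 <;> split_ifs <;> omega
      refine ⟨⟨hb', fun i hge hlt' => (key i hge hlt').2⟩, ?_⟩
      rintro ⟨hc1, hc2⟩
      by_cases hca : c.val = a
      · have hi : a + q - 1 < n := by omega
        have := key ⟨a + q - 1, hi⟩ (by simp only [Fin.val_mk]; omega)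
          (by simp only [Fin.val_mk]; omega)
        simp only [Fin.val_mk] at this
        obtain ⟨h1, h2⟩ := this
        split_ifs at h2 <;> omega
      · have hi : c.val - 1 < n := by omega
        have := key ⟨c.val - 1, hi⟩ (by simp only [Fin.val_mk]; omega)
          (by simp only [Fin.val_mk]; omega)
        simp only [Fin.val_mk] at this
        obtain ⟨h1, h2⟩ := this
        split_ifs at h2 <;> omega
  · rintro (⟨⟨hb, hcyc⟩, hnot⟩ | ⟨ha, hcv, hw⟩)
    · refine ⟨by omega, ?_⟩
      intro i hge hlt'
      have hi : i.val < n := by omega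
      rw [Phi_val c σ i hi]
      have h2 := hcyc ⟨i.val, hi⟩ (by simp only [Fin.val_mk]; omega)
        (by simp only [Fin.val_mk]; omega)
      simp only [Fin.val_mk] at h2
      rw [h2]
      split_ifs <;> omega
    · refine ⟨by omega, ?_⟩
      intro i hge hlt'
      subst ha
      by_cases hin : i.val = n
      · have : i = ⟨n, lt_add_one n⟩ := by simp only [Fin.ext_iff, Fin.val_mk]; exact hin
        rw [this, Phi_last_val]
        split_ifs <;> simp only [Fin.val_mk] at * <;> omega
      · have hi : i.val < n := by omega
        rw [Phi_val c σ i hi]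
        have h2 := hw ⟨i.val, hi⟩ (by simp only [Fin.val_mk]; omega)
        simp only [Fin.val_mk] at h2
        rw [h2]
        split_ifs <;> omega
-- chunk: wrapExt
section WrapExt
variable {n q : ℕ}

def wfAux (hq : 1 ≤ q) (hn : q ≤ n) (ρ : Equiv.Perm (Fin (n+1-q))) (v : ℕ) : ℕ :=
  if h : v < n + 1 - q then (ρ ⟨v, h⟩).val else if v = n - 1 then n + 1 - q else v + 1

def wgAux (hq : 1 ≤ q) (hn : q ≤ n) (ρ : Equiv.Perm (Fin (n+1-q))) (v : ℕ) : ℕ :=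
  if h : v < n + 1 - q then (ρ.symm ⟨v, h⟩).val else if v = n + 1 - q then n - 1 else v - 1

lemma wfAux_lt (hq : 1 ≤ q) (hn : q ≤ n) (ρ : Equiv.Perm (Fin (n+1-q))) {v : ℕ} (hv : v < n) : wfAux hq hn ρ v < n := by
  unfold wfAux
  split_ifs with h1 h2
  · have := (ρ ⟨v, h1⟩).isLt; omega
  · omega
  · omega

lemma wgAux_lt (hq : 1 ≤ q) (hn : q ≤ n) (ρ : Equiv.Perm (Fin (n+1-q))) {v : ℕ} (hv : v < n) : wgAux hq hn ρ v < n := by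
  unfold wgAux
  split_ifs with h1 h2
  · have := (ρ.symm ⟨v, h1⟩).isLt; omega
  · omega
  · omega

lemma wg_wf (hq : 1 ≤ q) (hn : q ≤ n) (ρ : Equiv.Perm (Fin (n+1-q))) {v : ℕ} (hv : v < n) :
    wgAux hq hn ρ (wfAux hq hn ρ v) = v := by
  unfold wfAux wgAux
  by_cases h : v < n + 1 - q
  · rw [dif_pos h, dif_pos ((ρ ⟨v, h⟩).isLt)]
    simp
  · rw [dif_neg h]
    by_cases h1 : v = n - 1
    · rw [if_pos h1, dif_neg (by omega), if_pos rfl]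
      omega
    · rw [if_neg h1, dif_neg (by omega), if_neg (by omega)]
      omega

lemma wf_wg (hq : 1 ≤ q) (hn : q ≤ n) (ρ : Equiv.Perm (Fin (n+1-q))) {v : ℕ} (hv : v < n) :
    wfAux hq hn ρ (wgAux hq hn ρ v) = v := by
  unfold wfAux wgAux
  by_cases h : v < n + 1 - q
  · rw [dif_pos h, dif_pos ((ρ.symm ⟨v, h⟩).isLt)]
    simp
  · rw [dif_neg h]
    by_cases h1 : v = n + 1 - q
    · rw [if_pos h1, dif_neg (by omega), if_pos (by omega)]
      omega
    · rw [if_neg h1, dif_neg (by omega), if_neg (by omega)]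
      omega

def wrapExt (hq : 1 ≤ q) (hn : q ≤ n) (ρ : Equiv.Perm (Fin (n+1-q))) : Equiv.Perm (Fin n) where
  toFun i := ⟨wfAux hq hn ρ i.val, wfAux_lt hq hn ρ i.isLt⟩
  invFun i := ⟨wgAux hq hn ρ i.val, wgAux_lt hq hn ρ i.isLt⟩
  left_inv i := Fin.ext (wg_wf hq hn ρ i.isLt)
  right_inv i := Fin.ext (wf_wg hq hn ρ i.isLt)

lemma wrapExt_val (hq : 1 ≤ q) (hn : q ≤ n) (ρ : Equiv.Perm (Fin (n+1-q))) (i : Fin n) :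
    (wrapExt hq hn ρ i).val = wfAux hq hn ρ i.val := rfl

end WrapExt
-- chunk: wrapExt properties and the wrap-count lemma
section WrapCount
variable {n q : ℕ}

lemma wrapTop_wrapExt (hq : 1 ≤ q) (hn : q ≤ n) (ρ : Equiv.Perm (Fin (n+1-q))) :
    wrapTop q (wrapExt hq hn ρ) := by
  intro i hi
  rw [wrapExt_val]
  unfold wfAux
  rw [dif_neg (by omega)]

lemma isAdjCycle_wrapExt_iff (hq : 1 ≤ q) (hn : q ≤ n) (ρ : Equiv.Perm (Fin (n+1-q))) (a : ℕ) :
    isAdjCycle q (wrapExt hq hn ρ) a ↔ isAdjCycle q ρ a := by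
  constructor
  · rintro ⟨hb, hcyc⟩
    have hm : a + q ≤ n + 1 - q := by
      by_contra hcon
      have hi : a + q - 1 < n := by omega
      have := hcyc ⟨a + q - 1, hi⟩ (by simp only [Fin.val_mk]; omega)
        (by simp only [Fin.val_mk]; omega)
      rw [wrapExt_val] at this
      unfold wfAux at this
      simp only [Fin.val_mk] at this
      rw [dif_neg (by omega)] at this
      split_ifs at this <;> omega
    refine ⟨hm, ?_⟩
    intro j hge hlt
    have hjn : j.val < n := by have := j.isLt; omega
    have := hcyc ⟨j.val, hjn⟩ (by simp only [Fin.val_mk]; omega)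
      (by simp only [Fin.val_mk]; omega)
    rw [wrapExt_val] at this
    unfold wfAux at this
    simp only [Fin.val_mk] at this
    rw [dif_pos (by omega : j.val < n + 1 - q)] at this
    simpa using this
  · rintro ⟨hb, hcyc⟩
    refine ⟨by omega, ?_⟩
    intro i hge hlt
    have him : i.val < n + 1 - q := by omega
    rw [wrapExt_val]
    unfold wfAux
    rw [dif_pos him]
    exact hcyc ⟨i.val, him⟩ (by simp only [Fin.val_mk]; omega)
      (by simp only [Fin.val_mk]; omega)

lemma adjCycleCount_wrapExt (hq : 1 ≤ q) (hn : q ≤ n) (ρ : Equiv.Perm (Fin (n+1-q))) :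
    adjCycleCount q (wrapExt hq hn ρ) = adjCycleCount q ρ := by
  unfold adjCycleCount
  congr 1
  ext a
  simp only [Finset.mem_filter, Finset.mem_range]
  rw [isAdjCycle_wrapExt_iff hq hn]
  constructor
  · rintro ⟨h1, h2⟩
    exact ⟨by have := h2.1; omega, h2⟩
  · rintro ⟨h1, h2⟩
    exact ⟨by have := h2.1; omega, h2⟩

lemma lt_of_wrapTop (hq : 1 ≤ q) (hn : q ≤ n) (σ : Equiv.Perm (Fin n)) (hw : wrapTop q σ)
    (i : Fin n) (h : i.val < n + 1 - q) : (σ i).val < n + 1 - q := by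
  by_contra hcon
  have hvn := (σ i).isLt
  by_cases hv : (σ i).val = n + 1 - q
  · have hmn : n + 1 - q < n := by omega
    have hi' := hw ⟨n - 1, by omega⟩ (by simp only [Fin.val_mk]; omega)
    simp only [Fin.val_mk, if_true] at hi'
    have : σ ⟨n - 1, by omega⟩ = σ i := Fin.ext (by omega)
    have := σ.injective this
    have : (n:ℕ) - 1 = i.val := congrArg Fin.val this
    omega
  · have hgt : n + 1 - q < (σ i).val := by omega
    have hi' := hw ⟨(σ i).val - 1, by omega⟩ (by simp only [Fin.val_mk]; omega)
    simp only [Fin.val_mk] at hi'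
    rw [if_neg (by omega)] at hi'
    have : σ ⟨(σ i).val - 1, by omega⟩ = σ i := Fin.ext (by omega)
    have := σ.injective this
    have : (σ i).val - 1 = i.val := congrArg Fin.val this
    omega

lemma symm_lt_of_wrapTop (hq : 1 ≤ q) (hn : q ≤ n) (σ : Equiv.Perm (Fin n)) (hw : wrapTop q σ)
    (i : Fin n) (h : i.val < n + 1 - q) : (σ.symm i).val < n + 1 - q := by
  by_contra hcon
  have := hw (σ.symm i) (by omega)
  rw [Equiv.apply_symm_apply] at this
  split_ifs at this <;> omega

def shrinkPerm (hq : 1 ≤ q) (hn : q ≤ n) (σ : Equiv.Perm (Fin n)) (hw : wrapTop q σ) :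
    Equiv.Perm (Fin (n+1-q)) where
  toFun j := ⟨(σ ⟨j.val, by have := j.isLt; omega⟩).val,
    lt_of_wrapTop hq hn σ hw _ (by simp only [Fin.val_mk]; exact j.isLt)⟩
  invFun j := ⟨(σ.symm ⟨j.val, by have := j.isLt; omega⟩).val,
    symm_lt_of_wrapTop hq hn σ hw _ (by simp only [Fin.val_mk]; exact j.isLt)⟩
  left_inv j := by
    apply Fin.ext
    simp only [Fin.val_mk, Fin.eta, Equiv.symm_apply_apply]
  right_inv j := by
    apply Fin.ext
    simp only [Fin.val_mk, Fin.eta, Equiv.apply_symm_apply]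

lemma wrapExt_shrinkPerm (hq : 1 ≤ q) (hn : q ≤ n) (σ : Equiv.Perm (Fin n)) (hw : wrapTop q σ) :
    wrapExt hq hn (shrinkPerm hq hn σ hw) = σ := by
  apply Equiv.ext
  intro i
  apply Fin.ext
  rw [wrapExt_val]
  unfold wfAux
  by_cases h : i.val < n + 1 - q
  · rw [dif_pos h]
    show (σ ⟨i.val, _⟩).val = _
    congr 1
  · rw [dif_neg h]
    exact (hw i (by omega)).symm

lemma wrapExt_injective (hq : 1 ≤ q) (hn : q ≤ n) :
    Function.Injective (wrapExt hq hn (n := n)) := by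
  intro ρ ρ' h
  apply Equiv.ext
  intro j
  apply Fin.ext
  have hjn : j.val < n := by have := j.isLt; omega
  have := congrArg (fun σ : Equiv.Perm (Fin n) => (σ ⟨j.val, hjn⟩).val) h
  simp only [wrapExt_val] at this
  unfold wfAux at this
  have hj1 : j.val < n + 1 - q := by have := j.isLt; omega
  split_ifs at this
  exact this

/-- counting permutations with a given adjacent-cycle count that satisfy `wrapTop`. -/
lemma wrap_count (hq : 1 ≤ q) (hn : q ≤ n) (j : ℕ) :
    (Finset.univ.filter
      (fun σ : Equiv.Perm (Fin n) => adjCycleCount q σ = j ∧ wrapTop q σ)).card =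
    numAqC q (n + 1 - q) j := by
  rw [numAqC]
  symm
  apply Finset.card_bij (fun ρ _ => wrapExt hq hn ρ)
  · intro ρ hρ
    simp only [Finset.mem_filter, Finset.mem_univ, true_and] at hρ ⊢
    exact ⟨by rw [adjCycleCount_wrapExt hq hn]; exact hρ, wrapTop_wrapExt hq hn ρ⟩
  · intro ρ hρ ρ' hρ' h
    exact wrapExt_injective hq hn h
  · intro σ hσ
    simp only [Finset.mem_filter, Finset.mem_univ, true_and] at hσ
    obtain ⟨hcount, hw⟩ := hσ
    refine ⟨shrinkPerm hq hn σ hw, ?_, wrapExt_shrinkPerm hq hn σ hw⟩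
    simp only [Finset.mem_filter, Finset.mem_univ, true_and]
    rw [← adjCycleCount_wrapExt hq hn, wrapExt_shrinkPerm hq hn σ hw]
    exact hcount

end WrapCount
-- chunk: hit counting
section Hit
variable {n q : ℕ}

def hitCard (q : ℕ) {n : ℕ} (σ : Equiv.Perm (Fin n)) (cv : ℕ) : ℕ :=
  (((Finset.range n).filter (isAdjCycle q σ)).filter (fun a => a ≤ cv ∧ cv < a + q)).card

lemma hitCard_le_one (hq : 1 ≤ q) (σ : Equiv.Perm (Fin n)) (cv : ℕ) :
    hitCard q σ cv ≤ 1 := by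
  apply Finset.card_le_one.2
  intro a ha b hb
  simp only [Finset.mem_filter, Finset.mem_range] at ha hb
  obtain ⟨⟨-, ha2⟩, ha3, ha4⟩ := ha
  obtain ⟨⟨-, hb2⟩, hb3, hb4⟩ := hb
  by_contra hne
  rcases Nat.lt_or_ge a b with h | h
  · exact starts_disjoint hq σ ha2 hb2 h (by omega)
  · have h' : b < a := by omega
    exact starts_disjoint hq σ hb2 ha2 h' (by omega)

lemma sum_hitCard (hq : 1 ≤ q) (hn : q ≤ n) (σ : Equiv.Perm (Fin n)) :
    ∑ cv ∈ Finset.range (n+1), hitCard q σ cv = q * adjCycleCount q σ := by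
  unfold hitCard
  have h1 : ∀ cv, (((Finset.range n).filter (isAdjCycle q σ)).filter
      (fun a => a ≤ cv ∧ cv < a + q)).card
      = ∑ a ∈ (Finset.range n).filter (isAdjCycle q σ),
          if a ≤ cv ∧ cv < a + q then 1 else 0 := by
    intro cv; rw [Finset.card_filter]
  simp only [h1]
  rw [Finset.sum_comm]
  rw [adjCycleCount, Finset.card_eq_sum_ones, Finset.mul_sum]
  apply Finset.sum_congr rfl
  intro a ha
  simp only [Finset.mem_filter, Finset.mem_range] at ha
  have hb : a + q ≤ n := ha.2.1
  have : ∑ cv ∈ Finset.range (n+1), (if a ≤ cv ∧ cv < a + q then 1 else 0)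
      = (Finset.Ico a (a+q)).card := by
    rw [Finset.card_eq_sum_ones]
    rw [← Finset.sum_filter]
    apply Finset.sum_congr _ (fun _ _ => rfl)
    ext x
    simp only [Finset.mem_filter, Finset.mem_range, Finset.mem_Ico]
    omega
  rw [this, Nat.card_Ico]
  omega

lemma hitCard_top_eq_zero (hq : 1 ≤ q) (hn : q ≤ n) (σ : Equiv.Perm (Fin n))
    (hw : wrapTop q σ) : hitCard q σ (n + 1 - q) = 0 := by
  unfold hitCard
  rw [Finset.card_eq_zero, Finset.filter_eq_empty_iff]
  intro a ha
  simp only [Finset.mem_filter, Finset.mem_range] at ha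
  obtain ⟨-, hb, hcyc⟩ := ha
  rintro ⟨h1, h2⟩
  have hi : a + q - 1 < n := by omega
  have e1 := hcyc ⟨a + q - 1, hi⟩ (by simp only [Fin.val_mk]; omega)
    (by simp only [Fin.val_mk]; omega)
  have e2 := hw ⟨a + q - 1, hi⟩ (by simp only [Fin.val_mk]; omega)
  simp only [Fin.val_mk, if_true] at e1 e2
  split_ifs at e2 <;> omega

lemma key_card (hq : 1 ≤ q) (hn : q ≤ n) (c : Fin (n+1)) (σ : Equiv.Perm (Fin n)) :
    adjCycleCount q (Phi c σ) + hitCard q σ c.val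
      = adjCycleCount q σ
        + (if c.val = n + 1 - q ∧ wrapTop q σ then 1 else 0) := by
  have hfc : (Finset.range (n+1)).filter (isAdjCycle q (Phi c σ))
      = (Finset.range (n+1)).filter
          (fun a => (isAdjCycle q σ a ∧ ¬(a ≤ c.val ∧ c.val < a + q))
            ∨ (a = n + 1 - q ∧ c.val = n + 1 - q ∧ wrapTop q σ)) := by
    apply Finset.filter_congr
    intro a _
    simp only [isAdjCycle_Phi_iff hq hn c σ a]
  rw [adjCycleCount, hfc, Finset.filter_or, Finset.card_union_of_disjoint]
  · have e1 : (Finset.range (n+1)).filter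
        (fun a => isAdjCycle q σ a ∧ ¬(a ≤ c.val ∧ c.val < a + q))
        = ((Finset.range n).filter (isAdjCycle q σ)).filter
            (fun a => ¬(a ≤ c.val ∧ c.val < a + q)) := by
      ext a
      simp only [Finset.mem_filter, Finset.mem_range]
      constructor
      · rintro ⟨h1, h2, h3⟩
        exact ⟨⟨by have := h2.1; omega, h2⟩, h3⟩
      · rintro ⟨⟨h1, h2⟩, h3⟩
        exact ⟨by omega, h2, h3⟩
    have e2 : (Finset.range (n+1)).filter
        (fun a => a = n + 1 - q ∧ c.val = n + 1 - q ∧ wrapTop q σ)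
        = if c.val = n + 1 - q ∧ wrapTop q σ then {n + 1 - q} else ∅ := by
      split_ifs with hcond
      · ext a
        simp only [Finset.mem_filter, Finset.mem_range, Finset.mem_singleton]
        constructor
        · rintro ⟨-, h1, -⟩; exact h1
        · rintro rfl; exact ⟨by omega, rfl, hcond⟩
      · apply Finset.filter_false_of_mem
        intro a _
        rintro ⟨-, h1, h2⟩
        exact hcond ⟨h1, h2⟩
    rw [e1, e2]
    have e3 : (((Finset.range n).filter (isAdjCycle q σ)).filter
          (fun a => ¬(a ≤ c.val ∧ c.val < a + q))).card + hitCard q σ c.val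
        = adjCycleCount q σ := by
      unfold hitCard adjCycleCount
      rw [add_comm]
      exact Finset.card_filter_add_card_filter_not _
    have e4 : (if c.val = n + 1 - q ∧ wrapTop q σ then ({n+1-q} : Finset ℕ) else ∅).card
        = if c.val = n + 1 - q ∧ wrapTop q σ then 1 else 0 := by
      split_ifs <;> simp
    omega
  · rw [Finset.disjoint_left]
    intro a h1 h2
    simp only [Finset.mem_filter, Finset.mem_range] at h1 h2
    have := h1.2.1.1
    have := h2.2.1
    omega

end Hit
-- chunk: per-sigma count
section PerSigma
variable {n q k : ℕ}

lemma per_sigma (hq : 1 ≤ q) (hn : q ≤ n) (hk : 1 ≤ k) (σ : Equiv.Perm (Fin n)) :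
    ((Finset.univ.filter (fun c : Fin (n+1) => adjCycleCount q (Phi c σ) = k)).card : ℤ)
      = (if adjCycleCount q σ = k - 1 ∧ wrapTop q σ then 1 else 0)
        + (if adjCycleCount q σ = k + 1 then (q : ℤ) * ((k:ℤ)+1) else 0)
        + (if adjCycleCount q σ = k then
            ((n:ℤ) + 1 - (q:ℤ) * (k:ℤ) - (if wrapTop q σ then 1 else 0)) else 0) := by
  set j := adjCycleCount q σ with hj
  set A : ℤ := if j = k - 1 then 1 else 0 with hA
  set B : ℤ := if j = k + 1 then 1 else 0 with hB
  set C : ℤ := if j = k then 1 else 0 with hC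
  set i1 : Fin (n+1) → ℤ :=
    fun c => if c.val = n + 1 - q ∧ wrapTop q σ then 1 else 0 with hi1
  set i2 : Fin (n+1) → ℤ := fun c => (hitCard q σ c.val : ℤ) with hi2
  have hcast : ((Finset.univ.filter
      (fun c : Fin (n+1) => adjCycleCount q (Phi c σ) = k)).card : ℤ)
      = ∑ c : Fin (n+1), (if adjCycleCount q (Phi c σ) = k then (1:ℤ) else 0) := by
    rw [Finset.card_filter, Nat.cast_sum]
    apply Finset.sum_congr rfl
    intro c _
    split_ifs <;> simp
  have hpoint : ∀ c : Fin (n+1),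
      (if adjCycleCount q (Phi c σ) = k then (1:ℤ) else 0)
        = A * i1 c + B * i2 c + C * (1 - i1 c - i2 c) := by
    intro c
    have hkey := key_card hq hn c σ
    have hle := hitCard_le_one hq σ c.val
    rw [← hj] at hkey
    by_cases h1 : c.val = n + 1 - q ∧ wrapTop q σ
    · have h0 : hitCard q σ c.val = 0 := by
        rw [h1.1]; exact hitCard_top_eq_zero hq hn σ h1.2
      rw [if_pos h1] at hkey
      simp only [hi1, hi2, if_pos h1, h0, Nat.cast_zero]
      rw [hA, hB, hC]
      split_ifs <;> omega
    · rw [if_neg h1] at hkey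
      simp only [hi1, hi2, if_neg h1]
      rw [hA, hB, hC]
      split_ifs <;> omega
  have hsum1 : ∑ c : Fin (n+1), i1 c = (if wrapTop q σ then (1:ℤ) else 0) := by
    by_cases hw : wrapTop q σ
    · rw [if_pos hw]
      simp only [hi1, hw, and_true]
      have hrw : ∀ c : Fin (n+1),
          (if c.val = n + 1 - q then (1:ℤ) else 0)
            = (if c = ⟨n + 1 - q, by omega⟩ then (1:ℤ) else 0) := by
        intro c
        congr 1
        simp [Fin.ext_iff]
      rw [Finset.sum_congr rfl (fun c _ => hrw c)]
      rw [Finset.sum_ite_eq' Finset.univ (⟨n + 1 - q, by omega⟩ : Fin (n+1))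
        (fun _ => (1:ℤ))]
      simp
    · rw [if_neg hw]
      simp [hi1, hw]
  have hsum2 : ∑ c : Fin (n+1), i2 c = (q:ℤ) * (j:ℤ) := by
    simp only [hi2]
    rw [← Nat.cast_sum]
    rw [Fin.sum_univ_eq_sum_range (fun cv => hitCard q σ cv) (n+1)]
    rw [sum_hitCard hq hn σ]
    push_cast
    rfl
  have hsum3 : ∑ c : Fin (n+1), (1:ℤ) = (n:ℤ) + 1 := by
    simp [Finset.card_univ]
  rw [hcast, Finset.sum_congr rfl (fun c _ => hpoint c)]
  rw [Finset.sum_add_distrib, Finset.sum_add_distrib, ← Finset.mul_sum, ← Finset.mul_sum,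
    ← Finset.mul_sum, Finset.sum_sub_distrib, Finset.sum_sub_distrib]
  rw [hsum1, hsum2, hsum3]
  have e1 : A * (if wrapTop q σ then (1:ℤ) else 0)
      = (if j = k - 1 ∧ wrapTop q σ then 1 else 0) := by
    rw [hA]; split_ifs <;> simp_all
  have e2 : B * ((q:ℤ) * (j:ℤ)) = (if j = k + 1 then (q:ℤ) * ((k:ℤ)+1) else 0) := by
    rw [hB]
    by_cases h : j = k + 1
    · rw [if_pos h, if_pos h, h]; push_cast; ring
    · rw [if_neg h, if_neg h]; ring
  have e3 : C * ((n:ℤ) + 1 - (if wrapTop q σ then (1:ℤ) else 0) - (q:ℤ) * (j:ℤ))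
      = (if j = k then
          ((n:ℤ) + 1 - (q:ℤ) * (k:ℤ) - (if wrapTop q σ then 1 else 0)) else 0) := by
    rw [hC]
    by_cases h : j = k
    · rw [if_pos h, if_pos h, h]; ring
    · rw [if_neg h, if_neg h]; ring
  rw [e1, e2, e3]

end PerSigma

lemma Phi_injective {n : ℕ} : Function.Injective
    (fun p : Fin (n+1) × Equiv.Perm (Fin n) => Phi p.1 p.2) := by
  rintro ⟨c, σ⟩ ⟨c', σ'⟩ h
  simp only at h
  have hc : c = c' := by
    have := congrArg (fun π : Equiv.Perm (Fin (n+1)) => π (Fin.last n)) h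
    simpa [Phi_last] using this
  subst hc
  have hσ : extTop σ = extTop σ' := mul_left_cancel h
  have : σ = σ' := by
    ext i
    have := congrArg (fun π : Equiv.Perm (Fin (n+1)) => π i.castSucc) hσ
    simpa [Fin.ext_iff] using this
  simp [this]

lemma Phi_bijective {n : ℕ} : Function.Bijective
    (fun p : Fin (n+1) × Equiv.Perm (Fin n) => Phi p.1 p.2) := by
  rw [Fintype.bijective_iff_injective_and_card]
  refine ⟨Phi_injective, ?_⟩
  simp [Fintype.card_perm, Nat.factorial_succ]

-- chunk: final assembly
theorem stmt10 (q n k : ℕ) (hq : 1 ≤ q) (hn : q ≤ n) (hk : 1 ≤ k) :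
    (numAqC q (n + 1) k : ℤ) =
      (numAqC q (n - q + 1) (k - 1) : ℤ) +
        ((n : ℤ) - (q : ℤ) * (k : ℤ) + 1) * (numAqC q n k : ℤ) -
        (numAqC q (n - q + 1) k : ℤ) +
        (q : ℤ) * ((k : ℤ) + 1) * (numAqC q n (k + 1) : ℤ) := by
  have hpairs : numAqC q (n+1) k
      = (Finset.univ.filter
          (fun p : Fin (n+1) × Equiv.Perm (Fin n) => adjCycleCount q (Phi p.1 p.2) = k)).card := by
    rw [numAqC, ← Fintype.card_subtype, ← Fintype.card_subtype]
    exact Fintype.card_congr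
      (((Equiv.ofBijective _ Phi_bijective).subtypeEquiv (fun p => Iff.rfl)).symm)
  have hfub : (Finset.univ.filter
      (fun p : Fin (n+1) × Equiv.Perm (Fin n) => adjCycleCount q (Phi p.1 p.2) = k)).card
      = ∑ σ : Equiv.Perm (Fin n),
          (Finset.univ.filter (fun c : Fin (n+1) => adjCycleCount q (Phi c σ) = k)).card := by
    rw [Finset.card_filter, ← Finset.univ_product_univ, Finset.sum_product, Finset.sum_comm]
    apply Finset.sum_congr rfl
    intro σ _
    rw [Finset.card_filter]
  have hmain : (numAqC q (n+1) k : ℤ)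
      = ∑ σ : Equiv.Perm (Fin n),
          (((Finset.univ.filter
            (fun c : Fin (n+1) => adjCycleCount q (Phi c σ) = k)).card : ℤ)) := by
    rw [hpairs, hfub, Nat.cast_sum]
  rw [hmain]
  rw [Finset.sum_congr rfl (fun σ _ => per_sigma hq hn hk σ)]
  rw [Finset.sum_add_distrib, Finset.sum_add_distrib]
  have hS1 : ∑ σ : Equiv.Perm (Fin n),
      (if adjCycleCount q σ = k - 1 ∧ wrapTop q σ then (1:ℤ) else 0)
      = (numAqC q (n + 1 - q) (k-1) : ℤ) := by
    rw [Finset.sum_boole, ← wrap_count hq hn (k-1)]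
  have hS2 : ∑ σ : Equiv.Perm (Fin n),
      (if adjCycleCount q σ = k + 1 then (q : ℤ) * ((k:ℤ)+1) else 0)
      = (q : ℤ) * ((k:ℤ)+1) * (numAqC q n (k+1) : ℤ) := by
    have hpt : ∀ σ : Equiv.Perm (Fin n),
        (if adjCycleCount q σ = k + 1 then (q : ℤ) * ((k:ℤ)+1) else 0)
          = (q : ℤ) * ((k:ℤ)+1) * (if adjCycleCount q σ = k + 1 then (1:ℤ) else 0) := by
      intro σ; split_ifs <;> ring
    rw [Finset.sum_congr rfl (fun σ _ => hpt σ), ← Finset.mul_sum, Finset.sum_boole, numAqC]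
  have hS3 : ∑ σ : Equiv.Perm (Fin n),
      (if adjCycleCount q σ = k then
        ((n:ℤ) + 1 - (q:ℤ) * (k:ℤ) - (if wrapTop q σ then 1 else 0)) else 0)
      = ((n:ℤ) + 1 - (q:ℤ) * (k:ℤ)) * (numAqC q n k : ℤ)
        - (numAqC q (n + 1 - q) k : ℤ) := by
    have hpt : ∀ σ : Equiv.Perm (Fin n),
        (if adjCycleCount q σ = k then
          ((n:ℤ) + 1 - (q:ℤ) * (k:ℤ) - (if wrapTop q σ then 1 else 0)) else 0)
          = ((n:ℤ) + 1 - (q:ℤ) * (k:ℤ)) * (if adjCycleCount q σ = k then (1:ℤ) else 0)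
            - (if adjCycleCount q σ = k ∧ wrapTop q σ then (1:ℤ) else 0) := by
      intro σ
      by_cases h1 : adjCycleCount q σ = k
      · by_cases h2 : wrapTop q σ
        · rw [if_pos h1, if_pos h2, if_pos h1, if_pos ⟨h1, h2⟩]; ring
        · rw [if_pos h1, if_neg h2, if_pos h1, if_neg (by tauto)]; ring
      · rw [if_neg h1, if_neg h1, if_neg (by tauto)]; ring
    rw [Finset.sum_congr rfl (fun σ _ => hpt σ), Finset.sum_sub_distrib, ← Finset.mul_sum,
      Finset.sum_boole, Finset.sum_boole, ← wrap_count hq hn k, numAqC]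
  rw [hS1, hS2, hS3]
  have hm : n + 1 - q = n - q + 1 := by omega
  rw [hm]
  ring
end

section
/- The formal power series g(z) = Σ_{n≥0} b_n z^n satisfies the differential equation z^2(1+z^q) g'(z) - (1+z^q)(1 - z - (q-1)z^q) g(z) + 1 - (q-1)z^q = 0. -/
/-!
Inclusion–exclusion over the sets `S` of positions at which an adjacent `q`-cycle is imposed:
the imposed cycles must occupy pairwise disjoint blocks, `j` such blocks can be placed in
`C(n - j(q-1), j)` ways, and the remaining `n - jq` points are permuted freely, so
`b_n = ∑_j (-1)^j C(n - j(q-1), j) (n - jq)!`. With `n = m + jq` the `j`-th term is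
`(-1)^j (j+1)^(m)`, writing `x^(m) = x(x+1)⋯(x+m-1)` for the rising factorial. The identities
`(j+2)^(m+1) = (m+1)(j+2)^(m) + (j+1)^(m+1)` and `(j+1)(j+2)^(m) = (j+1)^(m+1)` give, one `j` at a
time, the recurrence
`b_n = n b_{n-1} + (q-2) b_{n-q} + (n-q) b_{n-q-1} + (q-1) b_{n-2q} + [n = 0] - (q-1) [n = q]`,
which is the differential equation read off coefficientwise.
-/

open Finset

section Blocks

variable {q n : ℕ} {S : Finset ℕ} {a i : ℕ}

def IsBlockSet (q n : ℕ) (S : Finset ℕ) : Prop :=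
  (∀ a ∈ S, a + q ≤ n) ∧ ∀ a ∈ S, ∀ c ∈ S, a < c → a + q ≤ c

instance (q n : ℕ) : DecidablePred (IsBlockSet q n) := fun _ => by
  unfold IsBlockSet; infer_instance

def InBlock (q : ℕ) (S : Finset ℕ) (i : ℕ) : Prop := ∃ a ∈ S, a ≤ i ∧ i < a + q

instance (q : ℕ) (S : Finset ℕ) : DecidablePred (InBlock q S) := fun _ => by
  unfold InBlock; infer_instance

theorem IsBlockSet.eq_of_mem_block (hS : IsBlockSet q n S) {c : ℕ} (ha : a ∈ S) (hc : c ∈ S)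
    (hai : a ≤ i) (hia : i < a + q) (hci : c ≤ i) (hic : i < c + q) : a = c := by
  rcases lt_trichotomy a c with h | h | h
  · exact absurd (hS.2 a ha c hc h) (by omega)
  · exact h
  · exact absurd (hS.2 c hc a ha h) (by omega)

noncomputable def blockStart (q : ℕ) (S : Finset ℕ) (i : ℕ) : ℕ :=
  if h : InBlock q S i then h.choose else i

theorem IsBlockSet.blockStart_eq (hS : IsBlockSet q n S) (ha : a ∈ S) (hai : a ≤ i)
    (hia : i < a + q) : blockStart q S i = a := by
  have h : InBlock q S i := ⟨a, ha, hai, hia⟩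
  obtain ⟨hm, h1, h2⟩ := h.choose_spec
  rw [blockStart, dif_pos h]
  exact hS.eq_of_mem_block hm ha h1 h2 hai hia

noncomputable def blockSucc (q : ℕ) (S : Finset ℕ) (i : ℕ) : ℕ :=
  if InBlock q S i then
    if i = blockStart q S i + q - 1 then blockStart q S i else i + 1
  else i

noncomputable def blockPred (q : ℕ) (S : Finset ℕ) (i : ℕ) : ℕ :=
  if InBlock q S i then
    if i = blockStart q S i then blockStart q S i + q - 1 else i - 1
  else i

theorem IsBlockSet.blockSucc_eq (hS : IsBlockSet q n S) (ha : a ∈ S) (hai : a ≤ i)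
    (hia : i < a + q) : blockSucc q S i = if i = a + q - 1 then a else i + 1 := by
  rw [blockSucc, if_pos ⟨a, ha, hai, hia⟩, hS.blockStart_eq ha hai hia]

theorem IsBlockSet.blockPred_eq (hS : IsBlockSet q n S) (ha : a ∈ S) (hai : a ≤ i)
    (hia : i < a + q) : blockPred q S i = if i = a then a + q - 1 else i - 1 := by
  rw [blockPred, if_pos ⟨a, ha, hai, hia⟩, hS.blockStart_eq ha hai hia]

theorem blockSucc_of_not_inBlock (h : ¬InBlock q S i) : blockSucc q S i = i := if_neg h

theorem blockPred_of_not_inBlock (h : ¬InBlock q S i) : blockPred q S i = i := if_neg h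

theorem IsBlockSet.blockPred_blockSucc (hS : IsBlockSet q n S) (i : ℕ) :
    blockPred q S (blockSucc q S i) = i := by
  by_cases h : InBlock q S i
  · obtain ⟨a, ha, hai, hia⟩ := h
    rw [hS.blockSucc_eq ha hai hia]
    split_ifs with he
    · rw [hS.blockPred_eq ha le_rfl (by omega), if_pos rfl]; omega
    · rw [hS.blockPred_eq ha (by omega) (by omega), if_neg (by omega)]; omega
  · rw [blockSucc_of_not_inBlock h, blockPred_of_not_inBlock h]

theorem IsBlockSet.blockSucc_blockPred (hS : IsBlockSet q n S) (i : ℕ) :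
    blockSucc q S (blockPred q S i) = i := by
  by_cases h : InBlock q S i
  · obtain ⟨a, ha, hai, hia⟩ := h
    rw [hS.blockPred_eq ha hai hia]
    split_ifs with he
    · rw [hS.blockSucc_eq ha (by omega) (by omega), if_pos rfl]; omega
    · rw [hS.blockSucc_eq ha (by omega) (by omega), if_neg (by omega)]; omega
  · rw [blockPred_of_not_inBlock h, blockSucc_of_not_inBlock h]

theorem IsBlockSet.blockSucc_lt (hS : IsBlockSet q n S) (hi : i < n) : blockSucc q S i < n := by
  by_cases h : InBlock q S i
  · obtain ⟨a, ha, hai, hia⟩ := h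
    have := hS.1 a ha
    rw [hS.blockSucc_eq ha hai hia]
    split_ifs <;> omega
  · rwa [blockSucc_of_not_inBlock h]

theorem IsBlockSet.blockPred_lt (hS : IsBlockSet q n S) (hi : i < n) : blockPred q S i < n := by
  by_cases h : InBlock q S i
  · obtain ⟨a, ha, hai, hia⟩ := h
    have := hS.1 a ha
    rw [hS.blockPred_eq ha hai hia]
    split_ifs <;> omega
  · rwa [blockPred_of_not_inBlock h]

noncomputable def IsBlockSet.rotation (hS : IsBlockSet q n S) : Equiv.Perm (Fin n) where
  toFun i := ⟨blockSucc q S i, hS.blockSucc_lt i.isLt⟩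
  invFun i := ⟨blockPred q S i, hS.blockPred_lt i.isLt⟩
  left_inv i := Fin.ext (hS.blockPred_blockSucc i)
  right_inv i := Fin.ext (hS.blockSucc_blockPred i)

theorem IsBlockSet.forall_isAdjCycle_iff (hS : IsBlockSet q n S) (π : Equiv.Perm (Fin n)) :
    (∀ a ∈ S, isAdjCycle q π a) ↔ ∀ i : Fin n, InBlock q S i → π i = hS.rotation i := by
  constructor
  · rintro h i ⟨a, ha, hai, hia⟩
    ext
    rw [(h a ha).2 i hai hia]
    exact (hS.blockSucc_eq ha hai hia).symm
  · refine fun h a ha => ⟨hS.1 a ha, fun i hai hia => ?_⟩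
    rw [h i ⟨a, ha, hai, hia⟩]
    exact hS.blockSucc_eq ha hai hia

end Blocks

section Counting

variable {q n : ℕ} {S : Finset ℕ}

theorem IsBlockSet.card_inBlock (hS : IsBlockSet q n S) :
    Fintype.card {i : Fin n // InBlock q S i} = q * #S := by
  have e : {i : Fin n // InBlock q S i} ≃ S.biUnion fun a => Ico a (a + q) :=
    { toFun i := ⟨i.1, by obtain ⟨a, ha, h⟩ := i.2; exact mem_biUnion.2 ⟨a, ha, mem_Ico.2 h⟩⟩
      invFun i := by
        refine ⟨⟨i.1, ?_⟩, ?_⟩ <;> obtain ⟨a, ha, h⟩ := mem_biUnion.1 i.2 <;> rw [mem_Ico] at h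
        · have := hS.1 a ha; omega
        · exact ⟨a, ha, h⟩
      left_inv _ := rfl
      right_inv _ := rfl }
  rw [Fintype.card_congr e, Fintype.card_coe, card_biUnion, sum_congr rfl fun a _ => by
    rw [Nat.card_Ico, Nat.add_sub_cancel_left], sum_const, smul_eq_mul, mul_comm]
  intro a ha c hc hac
  refine disjoint_left.2 fun i hia hic => hac ?_
  rw [mem_Ico] at hia hic
  exact hS.eq_of_mem_block ha hc hia.1 hia.2 hic.1 hic.2

/-- Composing with the inverse rotation identifies these permutations with the permutations
of the points outside the blocks. -/
theorem IsBlockSet.card_forall_isAdjCycle (hS : IsBlockSet q n S) :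
    #{π : Equiv.Perm (Fin n) | ∀ a ∈ S, isAdjCycle q π a} = (n - q * #S).factorial := by
  have e : {π : Equiv.Perm (Fin n) // ∀ a ∈ S, isAdjCycle q π a} ≃
      Equiv.Perm {i : Fin n // ¬InBlock q S i} :=
    calc _ ≃ {ρ : Equiv.Perm (Fin n) // ∀ i : Fin n, ¬¬InBlock q S i → ρ i = i} := by
          refine Equiv.subtypeEquiv (Equiv.mulLeft hS.rotation⁻¹) fun π => ?_
          simp only [hS.forall_isAdjCycle_iff, not_not, Equiv.coe_mulLeft, Equiv.Perm.mul_apply,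
            Equiv.Perm.inv_eq_iff_eq]
      _ ≃ _ := (Equiv.Perm.subtypeEquivSubtypePerm _).symm
  rw [← Fintype.card_subtype, Fintype.card_congr e, Fintype.card_perm,
    Fintype.card_subtype_compl, hS.card_inBlock, Fintype.card_fin]

theorem card_forall_isAdjCycle_of_not_isBlockSet (hS : ¬IsBlockSet q n S) :
    #{π : Equiv.Perm (Fin n) | ∀ a ∈ S, isAdjCycle q π a} = 0 := by
  refine card_eq_zero.2 (filter_eq_empty_iff.2 fun π _ h => hS ⟨fun a ha => (h a ha).1, ?_⟩)
  intro a ha c hc hac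
  by_contra hlt
  have hn := (h a ha).1
  have hlast := (h a ha).2 ⟨a + q - 1, by omega⟩ (by simp; omega) (by simp; omega)
  have hmid := (h c hc).2 ⟨a + q - 1, by omega⟩ (by simp; omega) (by simp; omega)
  simp only [if_pos] at hlast hmid
  rw [if_neg (by omega)] at hmid
  omega

end Counting

section BlockSets

variable {q : ℕ}

def blockSets (q n j : ℕ) : Finset (Finset ℕ) :=
  {S ∈ (range n).powersetCard j | IsBlockSet q n S}

theorem mem_blockSets {n j : ℕ} {S : Finset ℕ} :
    S ∈ blockSets q n j ↔ (S ⊆ range n ∧ #S = j) ∧ IsBlockSet q n S := by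
  rw [blockSets, mem_filter, mem_powersetCard]

theorem blockSets_eq_empty {n j : ℕ} (hn : n < q) : blockSets q n (j + 1) = ∅ := by
  refine eq_empty_of_forall_notMem fun S hS => ?_
  obtain ⟨⟨-, hcard⟩, hS⟩ := mem_blockSets.1 hS
  obtain ⟨a, ha⟩ := card_pos.1 (by omega : 0 < #S)
  have := hS.1 a ha
  omega

theorem filter_notMem_blockSets_succ (hq : 1 ≤ q) (n j : ℕ) :
    {S ∈ blockSets q (n + 1) j | n + 1 - q ∉ S} = blockSets q n j := by
  ext S
  simp only [mem_filter, mem_blockSets, subset_iff, mem_range, IsBlockSet]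
  constructor
  · rintro ⟨⟨⟨-, hcard⟩, hle, hsep⟩, hm⟩
    have hle' : ∀ a ∈ S, a + q ≤ n := fun a ha => by
      have := hle a ha
      have : a ≠ n + 1 - q := fun h => hm (h ▸ ha)
      omega
    exact ⟨⟨fun a ha => by have := hle' a ha; omega, hcard⟩, hle', hsep⟩
  · rintro ⟨⟨hsub, hcard⟩, hle, hsep⟩
    refine ⟨⟨⟨fun a ha => by have := hsub ha; omega, hcard⟩,
      fun a ha => by have := hle a ha; omega, hsep⟩, fun hm => ?_⟩
    have := hle _ hm
    omega

/-- Removing the last block `[m, m + q)` leaves a block set in `[0, m)`. -/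
theorem card_filter_mem_blockSets_add (hq : 1 ≤ q) (m j : ℕ) :
    #{S ∈ blockSets q (m + q) (j + 1) | m ∈ S} = #(blockSets q m j) := by
  refine card_nbij' (·.erase m) (insert m ·) (fun S hS => ?_) (fun T hT => ?_)
    (fun S hS => insert_erase (mem_filter.1 hS).2) (fun T hT => ?_)
  · rw [mem_coe, mem_filter, mem_blockSets] at hS
    obtain ⟨⟨⟨-, hcard⟩, hle, hsep⟩, hm⟩ := hS
    have hbelow : ∀ a ∈ S, a ≠ m → a + q ≤ m := fun a ha hne => by
      rcases lt_or_gt_of_ne hne with h | h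
      · exact hsep a ha m hm h
      · have := hsep m hm a ha h; have := hle a ha; omega
    rw [mem_coe, mem_blockSets, card_erase_of_mem hm, hcard, Nat.add_sub_cancel]
    refine ⟨⟨fun a ha => ?_, rfl⟩, fun a ha => ?_, fun a ha c hc => hsep a (mem_of_mem_erase ha) c
      (mem_of_mem_erase hc)⟩ <;> obtain ⟨hne, ha⟩ := mem_erase.1 ha
    · have := hbelow a ha hne
      rw [mem_range]; omega
    · exact hbelow a ha hne
  · rw [mem_coe, mem_blockSets, subset_iff] at hT
    obtain ⟨⟨hsub, hcard⟩, hle, hsep⟩ := hT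
    have hm : m ∉ T := fun h => by have := hsub h; rw [mem_range] at this; omega
    rw [mem_coe, mem_filter, mem_blockSets, card_insert_of_notMem hm, hcard]
    refine ⟨⟨⟨fun a ha => ?_, rfl⟩, fun a ha => ?_, fun a ha c hc hac => ?_⟩, mem_insert_self m T⟩
    · rw [mem_range]
      rcases mem_insert.1 ha with rfl | ha
      · omega
      · have := hle a ha; omega
    · rcases mem_insert.1 ha with rfl | ha
      · omega
      · have := hle a ha; omega
    · rcases mem_insert.1 ha with rfl | haT <;> rcases mem_insert.1 hc with rfl | hcT
      · omega
      · have := hsub hcT; rw [mem_range] at this; omega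
      · have := hle a haT; omega
      · exact hsep a haT c hcT hac
  · rw [mem_coe, mem_blockSets, subset_iff] at hT
    exact erase_insert fun h => by have := hT.1.1 h; rw [mem_range] at this; omega

theorem card_blockSets (hq : 1 ≤ q) (n j : ℕ) :
    #(blockSets q n j) = (n - j * (q - 1)).choose j := by
  induction n using Nat.strong_induction_on generalizing j with
  | _ n ih =>
  rcases j with _ | j
  · rw [blockSets, powersetCard_zero, filter_singleton,
      if_pos ⟨fun a ha => absurd ha (notMem_empty a), fun a ha => absurd ha (notMem_empty a)⟩]
    simp
  rcases n with _ | n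
  · rw [blockSets_eq_empty (by omega), card_empty, Nat.choose_eq_zero_of_lt (by omega)]
  by_cases hqn : q ≤ n + 1
  · obtain ⟨m, hm⟩ : ∃ m, n + 1 = m + q := ⟨n + 1 - q, by omega⟩
    rw [← card_filter_add_card_filter_not (fun S => n + 1 - q ∈ S),
      filter_notMem_blockSets_succ hq, ih n (by omega), show n + 1 - q = m by omega, hm,
      card_filter_mem_blockSets_add hq, ih m (by omega), ← hm]
    have hK : (j + 1) * (q - 1) = j * (q - 1) + (q - 1) := by ring
    rw [show m - j * (q - 1) = n - (j + 1) * (q - 1) by omega]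
    rcases le_or_gt ((j + 1) * (q - 1)) n with h | h
    · rw [show n + 1 - (j + 1) * (q - 1) = n - (j + 1) * (q - 1) + 1 by omega,
        Nat.choose_succ_succ']
    · obtain ⟨i, rfl⟩ : ∃ i, j = i + 1 := ⟨j - 1, by rcases j with _ | j <;> simp_all; omega⟩
      rw [show n + 1 - (i + 1 + 1) * (q - 1) = 0 by omega, show n - (i + 1 + 1) * (q - 1) = 0 by omega,
        Nat.choose_eq_zero_of_lt i.succ_pos, zero_add]
  · rw [blockSets_eq_empty (by omega), card_empty, Nat.choose_eq_zero_of_lt]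
    have : q - 1 ≤ (j + 1) * (q - 1) := Nat.le_mul_of_pos_left _ j.succ_pos
    omega

end BlockSets

section InclusionExclusion

theorem b_eq_card_inf_compl (q n : ℕ) :
    b q n = #((range n).inf fun a => ({π : Equiv.Perm (Fin n) | isAdjCycle q π a} : Finset _)ᶜ) := by
  rw [b, numAqC]
  congr 1
  ext π
  simp [mem_inf, adjCycleCount, filter_eq_empty_iff]

theorem card_forall_isAdjCycle (q n : ℕ) (S : Finset ℕ) :
    #{π : Equiv.Perm (Fin n) | ∀ a ∈ S, isAdjCycle q π a} =
      if IsBlockSet q n S then (n - q * #S).factorial else 0 := by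
  split_ifs with hS
  · exact hS.card_forall_isAdjCycle
  · exact card_forall_isAdjCycle_of_not_isBlockSet hS

theorem b_eq_sum_choose_mul_factorial (q n : ℕ) (hq : 1 ≤ q) :
    (b q n : ℤ) = ∑ j ∈ range (n + 1),
      (-1 : ℤ) ^ j * ((n - j * (q - 1)).choose j * (n - j * q).factorial : ℕ) := by
  rw [b_eq_card_inf_compl, inclusion_exclusion_card_inf_compl,
    ← sum_fiberwise_of_maps_to (g := card) (t := range (n + 1)) fun S hS =>
      mem_range_succ_iff.2 (card_range n ▸ card_le_card (mem_powerset.1 hS))]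
  refine sum_congr rfl fun j _ => ?_
  rw [← powersetCard_eq_filter]
  have hinf : ∀ S : Finset ℕ,
      S.inf (fun a => ({π : Equiv.Perm (Fin n) | isAdjCycle q π a} : Finset _)) =
      ({π | ∀ a ∈ S, isAdjCycle q π a} : Finset _) := fun S => by ext π; simp [mem_inf]
  calc _ = ∑ S ∈ (range n).powersetCard j,
        if IsBlockSet q n S then (-1) ^ j * ((n - j * q).factorial : ℤ) else 0 := by
        refine sum_congr rfl fun S hS => ?_
        rw [hinf, card_forall_isAdjCycle, (mem_powersetCard.1 hS).2, mul_comm q]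
        split_ifs <;> simp
    _ = _ := by
        rw [← sum_filter, sum_const, ← blockSets, card_blockSets hq, nsmul_eq_mul]
        push_cast
        ring

end InclusionExclusion

theorem Nat.ascFactorial_succ' (n k : ℕ) : n.ascFactorial (k + 1) = n * (n + 1).ascFactorial k := by
  rw [add_comm k 1, ← Nat.ascFactorial_mul_ascFactorial n 1 k]
  simp [Nat.ascFactorial]

theorem Nat.succ_ascFactorial_succ (n k : ℕ) :
    (n + 1).ascFactorial (k + 1) = (k + 1) * (n + 1).ascFactorial k + n.ascFactorial (k + 1) := by
  rw [Nat.ascFactorial_succ, Nat.ascFactorial_succ' n]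
  ring

open PowerSeries

section Recurrence

variable {q : ℕ}

/-- With `m = n - k - j * q`, this is `(-1) ^ j * (m + j)! / j!`, the `j`-th inclusion–exclusion
term of `b q (n - k)`. -/
def bTerm (q k n j : ℕ) : ℚ :=
  if k + j * q ≤ n then (-1) ^ j * ((j + 1).ascFactorial (n - k - j * q) : ℚ) else 0

theorem bTerm_of_eq {k n j : ℕ} (m : ℕ) (h : n = m + k + j * q) :
    bTerm q k n j = (-1) ^ j * ((j + 1).ascFactorial m : ℚ) := by
  rw [bTerm, if_pos (by omega), show n - k - j * q = m by omega]

theorem bTerm_of_lt {k n j : ℕ} (h : n < k + j * q) : bTerm q k n j = 0 :=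
  if_neg (by omega)

theorem b_eq_sum_bTerm (hq : 1 ≤ q) (n : ℕ) :
    (b q n : ℚ) = ∑ j ∈ range (n + 1), bTerm q 0 n j := by
  have h := congrArg (Int.cast : ℤ → ℚ) (b_eq_sum_choose_mul_factorial q n hq)
  push_cast at h
  rw [h]
  refine sum_congr rfl fun j _ => ?_
  have hj : j * (q - 1) + j = j * q := by
    rw [Nat.mul_sub_one, Nat.sub_add_cancel (Nat.le_mul_of_pos_right j hq)]
  by_cases hjn : j * q ≤ n
  · rw [bTerm_of_eq (n - j * q) (by omega), Nat.ascFactorial_eq_factorial_mul_choose,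
      show n - j * (q - 1) = j + (n - j * q) by omega, Nat.choose_symm_add]
    push_cast
    ring
  · have hj0 : j ≠ 0 := by rintro rfl; simp at hjn
    rw [bTerm_of_lt (by omega), Nat.choose_eq_zero_of_lt (by omega)]
    simp

theorem sum_range_bTerm_congr {k n M M' : ℕ} (hM : n < k + M * q) (hM' : n < k + M' * q) :
    ∑ j ∈ range M, bTerm q k n j = ∑ j ∈ range M', bTerm q k n j := by
  wlog hle : M ≤ M' generalizing M M'
  · exact (this hM' hM (by omega)).symm
  refine sum_subset (range_subset_range.2 hle) fun j _ hj => bTerm_of_lt ?_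
  have : M * q ≤ j * q := Nat.mul_le_mul_right q (by simpa using hj)
  omega

theorem coeff_X_pow_mul_eq_sum_bTerm (hq : 1 ≤ q) {k n M : ℕ} (hM : n < k + M * q) :
    coeff n (X ^ k * PowerSeries.mk fun i => (b q i : ℚ)) = ∑ j ∈ range M, bTerm q k n j := by
  rw [coeff_X_pow_mul', coeff_mk]
  split_ifs with hk
  · have hshift : ∀ j, bTerm q 0 (n - k) j = bTerm q k n j := fun j => by
      by_cases h : k + j * q ≤ n
      · rw [bTerm_of_eq (n - k - j * q) (by omega), bTerm_of_eq (n - k - j * q) (by omega)]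
      · rw [bTerm_of_lt (by omega), bTerm_of_lt (by omega)]
    rw [b_eq_sum_bTerm hq, sum_congr rfl fun j _ => hshift j]
    refine sum_range_bTerm_congr ?_ hM
    have : n - k + 1 ≤ (n - k + 1) * q := Nat.le_mul_of_pos_right _ hq
    omega
  · exact (sum_eq_zero fun j _ => bTerm_of_lt (by omega)).symm

theorem bTerm_recurrence_zero (n : ℕ) :
    bTerm q 0 n 0 - n * bTerm q 1 n 0 = if n = 0 then 1 else 0 := by
  rcases n with _ | m
  · rw [bTerm_of_eq 0 (by ring), bTerm_of_lt (by omega)]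
    simp
  · rw [bTerm_of_eq (m + 1) (by ring), bTerm_of_eq m (by ring), if_neg m.succ_ne_zero,
      zero_add, Nat.one_ascFactorial, Nat.one_ascFactorial, Nat.factorial_succ]
    push_cast
    ring

theorem bTerm_recurrence_one (n : ℕ) :
    bTerm q 0 n 1 - n * bTerm q 1 n 1 - ((q : ℚ) - 2) * bTerm q q n 0
      - ((n : ℚ) - q) * bTerm q (q + 1) n 0 = -((q : ℚ) - 1) * if n = q then 1 else 0 := by
  rcases lt_or_ge n q with hn | hn
  · rw [bTerm_of_lt (by omega), bTerm_of_lt (by omega), bTerm_of_lt (by omega),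
      bTerm_of_lt (by omega), if_neg hn.ne]
    ring
  obtain ⟨m, rfl⟩ : ∃ m, n = m + q := ⟨n - q, by omega⟩
  rcases m with _ | m
  · rw [bTerm_of_eq 0 (by ring), bTerm_of_lt (by omega), bTerm_of_eq 0 (by ring),
      bTerm_of_lt (by omega), if_pos (zero_add q)]
    simp only [Nat.ascFactorial_zero]
    ring
  · rw [bTerm_of_eq (m + 1) (by ring), bTerm_of_eq m (by ring), bTerm_of_eq (m + 1) (by ring),
      bTerm_of_eq m (by ring), if_neg (by omega)]
    have h1 := Nat.succ_ascFactorial_succ 1 m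
    have h2 := Nat.ascFactorial_succ' 1 m
    have h3 := Nat.ascFactorial_succ (n := 1) (k := m)
    rw [← Nat.cast_inj (R := ℚ)] at h1 h2 h3
    push_cast at h1 h2 h3 ⊢
    linear_combination -h1 - (q : ℚ) * h2 + h3

theorem bTerm_recurrence_add_two (n j : ℕ) :
    bTerm q 0 n (j + 2) - n * bTerm q 1 n (j + 2) - ((q : ℚ) - 2) * bTerm q q n (j + 1)
      - ((n : ℚ) - q) * bTerm q (q + 1) n (j + 1) - ((q : ℚ) - 1) * bTerm q (2 * q) n j = 0 := by
  have e1 : (j + 1) * q = q + j * q := by ring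
  have e2 : (j + 2) * q = q + (j + 1) * q := by ring
  rcases lt_or_ge n ((j + 2) * q) with hn | hn
  · rw [bTerm_of_lt (by omega), bTerm_of_lt (by omega), bTerm_of_lt (by omega),
      bTerm_of_lt (by omega), bTerm_of_lt (by omega)]
    ring
  obtain ⟨m, rfl⟩ : ∃ m, n = m + (j + 2) * q := ⟨n - (j + 2) * q, by omega⟩
  rcases m with _ | m
  · rw [bTerm_of_eq 0 (by ring), bTerm_of_lt (by omega), bTerm_of_eq 0 (by ring),
      bTerm_of_lt (by omega), bTerm_of_eq 0 (by ring)]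
    simp only [Nat.ascFactorial_zero]
    ring
  · rw [bTerm_of_eq (m + 1) (by ring), bTerm_of_eq m (by ring), bTerm_of_eq (m + 1) (by ring),
      bTerm_of_eq m (by ring), bTerm_of_eq (m + 1) (by ring)]
    have h1 := Nat.succ_ascFactorial_succ (j + 2) m
    have h1' := Nat.succ_ascFactorial_succ (j + 1) m
    have h2 := Nat.ascFactorial_succ' (j + 2) m
    have h2' := Nat.ascFactorial_succ' (j + 1) m
    rw [← Nat.cast_inj (R := ℚ)] at h1 h1' h2 h2'
    simp only [show j + 1 + 1 = j + 2 from rfl] at h1' h2' ⊢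
    push_cast at h1 h1' h2 h2' ⊢
    linear_combination (-1 : ℚ) ^ j * (h1 - h1' + (q : ℚ) * (h2 - h2'))

theorem b_coeff_recurrence (hq : 1 ≤ q) (n : ℕ) :
    letI f : ℚ⟦X⟧ := PowerSeries.mk fun i => (b q i : ℚ)
    coeff n f - n * coeff n (X * f) - ((q : ℚ) - 2) * coeff n (X ^ q * f)
      - ((n : ℚ) - q) * coeff n (X ^ (q + 1) * f) - ((q : ℚ) - 1) * coeff n (X ^ (2 * q) * f)
      = (if n = 0 then 1 else 0) - ((q : ℚ) - 1) * if n = q then 1 else 0 := by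
  have hM : ∀ k M, n + 1 ≤ k + M → n < k + M * q := fun k M hM => by
    have := Nat.le_mul_of_pos_right M hq
    omega
  -- the ranges are chosen so that, after peeling off the levels `j = 0, 1`, all sums run over
  -- `range n` and group into instances of `bTerm_recurrence_add_two`
  have c0 := coeff_X_pow_mul_eq_sum_bTerm hq (hM 0 (n + 2) (by omega))
  have c1 := coeff_X_pow_mul_eq_sum_bTerm hq (hM 1 (n + 2) (by omega))
  rw [pow_zero, one_mul] at c0
  rw [pow_one] at c1
  rw [c0, c1, coeff_X_pow_mul_eq_sum_bTerm hq (hM q (n + 1) (by omega)),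
    coeff_X_pow_mul_eq_sum_bTerm hq (hM (q + 1) (n + 1) (by omega)),
    coeff_X_pow_mul_eq_sum_bTerm hq (hM (2 * q) n (by omega)),
    sum_range_succ' (bTerm q 0 n), sum_range_succ' fun j => bTerm q 0 n (j + 1),
    sum_range_succ' (bTerm q 1 n), sum_range_succ' fun j => bTerm q 1 n (j + 1),
    sum_range_succ' (bTerm q q n), sum_range_succ' (bTerm q (q + 1) n)]
  have h2 := sum_eq_zero (s := range n) fun j _ => bTerm_recurrence_add_two (q := q) n j
  simp only [sum_sub_distrib, ← mul_sum] at h2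
  simp only [zero_add, add_assoc, Nat.reduceAdd]
  linear_combination h2 + bTerm_recurrence_one (q := q) n + bTerm_recurrence_zero (q := q) n

end Recurrence

theorem PowerSeries.coeff_X_pow_succ_mul_derivative {R : Type*} [CommRing R] (f : R⟦X⟧)
    (k n : ℕ) : coeff n (X ^ (k + 1) * derivative R f) = ((n : R) - k) * coeff n (X ^ k * f) := by
  rw [coeff_X_pow_mul', coeff_X_pow_mul', coeff_derivative]
  split_ifs with h1 h2 h2
  · rw [show n - (k + 1) + 1 = n - k by omega, Nat.cast_sub (by omega : k + 1 ≤ n)]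
    push_cast
    ring
  · omega
  · rw [show n = k by omega, sub_self, zero_mul]
  · rw [mul_zero]

theorem ode_of_coeff_recurrence (q : ℕ) {f : ℚ⟦X⟧}
    (h : ∀ n : ℕ, coeff n f - n * coeff n (X * f) - ((q : ℚ) - 2) * coeff n (X ^ q * f)
      - ((n : ℚ) - q) * coeff n (X ^ (q + 1) * f) - ((q : ℚ) - 1) * coeff n (X ^ (2 * q) * f)
      = (if n = 0 then 1 else 0) - ((q : ℚ) - 1) * if n = q then 1 else 0) :
    X ^ 2 * (1 + X ^ q) * derivative ℚ f - (1 + X ^ q) * (1 - X - ((q : ℚ⟦X⟧) - 1) * X ^ q) * f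
      + 1 - ((q : ℚ⟦X⟧) - 1) * X ^ q = 0 := by
  have hexpand : X ^ 2 * (1 + X ^ q) * derivative ℚ f
      - (1 + X ^ q) * (1 - X - ((q : ℚ⟦X⟧) - 1) * X ^ q) * f + 1 - ((q : ℚ⟦X⟧) - 1) * X ^ q
      = X ^ (1 + 1) * derivative ℚ f + X ^ (q + 1 + 1) * derivative ℚ f - f + X * f
        + ((q : ℚ) - 2) • (X ^ q * f) + X ^ (q + 1) * f + ((q : ℚ) - 1) • (X ^ (2 * q) * f)
        + 1 - ((q : ℚ) - 1) • X ^ q := by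
    simp only [smul_eq_C_mul, map_sub, map_natCast, map_ofNat, map_one]
    ring
  ext n
  rw [hexpand]
  simp only [map_add, map_sub, map_smul, smul_eq_mul, coeff_X_pow_succ_mul_derivative, pow_one,
    coeff_one, coeff_X_pow, map_zero]
  push_cast
  linear_combination -h n

open PowerSeries in
theorem stmt11 (q : ℕ) (hq : 1 ≤ q) :
    letI g : PowerSeries ℚ := PowerSeries.mk fun n => (b q n : ℚ)
    X ^ 2 * (1 + X ^ q) * (PowerSeries.derivative ℚ g) -
        (1 + X ^ q) * (1 - X - ((q : PowerSeries ℚ) - 1) * X ^ q) * g +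
        1 - ((q : PowerSeries ℚ) - 1) * X ^ q = 0 :=
  ode_of_coeff_recurrence q (b_coeff_recurrence hq)
end
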